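/- arXiv:0907.5268 — 13 statements merged into one kernel-verified Lean document; each statement's English description precedes it below -/
import Mathlib

section
/- Let α be a Frenet curve on a nondegenerate open interval I whose curvatures κ, τ, σ are nonzero constants (a helix/W-curve). Then α is not a generalized helix: there is no nonzero vector U ∈ E⁴ such that s ↦ ⟪T(s), U⟫ is constant on I. -/
open scoped RealInnerProductSpace

local notation "E4" => EuclideanSpace ℝ (Fin 4)

private lemma deriv_inner_zero_of_const {f : ℝ → EuclideanSpace ℝ (Fin 4)}
    {U : EuclideanSpace ℝ (Fin 4)} {I : Set ℝ} (hI : IsOpen I)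
    (hf : ContDiff ℝ (⊤ : ℕ∞) f) {c : ℝ} (h : ∀ s ∈ I, ⟪f s, U⟫ = c) :
    ∀ s ∈ I, ⟪deriv f s, U⟫ = 0 := by
  intro s hs
  have hd : HasDerivAt (fun t => ⟪f t, U⟫) (⟪f s, (0 : EuclideanSpace ℝ (Fin 4))⟫ + ⟪deriv f s, U⟫) s :=
    ((hf.differentiable (by simp) s).hasDerivAt.inner ℝ (hasDerivAt_const s U))
  have heq : (fun t => ⟪f t, U⟫) =ᶠ[nhds s] (fun _ => c) :=
    Filter.eventuallyEq_of_mem (hI.mem_nhds hs) h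
  have hd2 : HasDerivAt (fun t => ⟪f t, U⟫) 0 s :=
    (hasDerivAt_const s c).congr_of_eventuallyEq heq
  have := hd.unique hd2
  simpa using this

/-- A helix (W-curve) in `E⁴`, i.e. a Frenet curve whose curvatures
`κ, τ, σ` are nonzero constants, cannot be a generalized helix: no nonzero direction `U`
makes a constant angle with the tangent on `I`. -/
theorem helix_not_generalized_helix
    (I : Set ℝ) (hI : IsOpen I) (hne : I.Nontrivial)
    (α T N B E : ℝ → E4) (κ τ σ : ℝ)
    (hα : ContDiff ℝ (⊤ : ℕ∞) α) (hT : ContDiff ℝ (⊤ : ℕ∞) T) (hN : ContDiff ℝ (⊤ : ℕ∞) N)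
    (hB : ContDiff ℝ (⊤ : ℕ∞) B) (hE : ContDiff ℝ (⊤ : ℕ∞) E)
    (horth : ∀ s ∈ I, Orthonormal ℝ ![T s, N s, B s, E s])
    (hTα : ∀ s ∈ I, T s = deriv α s)
    (hfr : ∀ s ∈ I,
      deriv T s = κ • N s ∧
      deriv N s = (-κ) • T s + τ • B s ∧
      deriv B s = (-τ) • N s + σ • E s ∧
      deriv E s = (-σ) • B s)
    (hκ0 : κ ≠ 0) (hτ0 : τ ≠ 0) (hσ0 : σ ≠ 0) :
    ¬ ∃ U : E4, U ≠ 0 ∧ ∃ c : ℝ, ∀ s ∈ I, ⟪T s, U⟫ = c := by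
  rintro ⟨U, hU, c, hc⟩
  -- ⟪N, U⟫ = 0 on I
  have hNU : ∀ s ∈ I, ⟪N s, U⟫ = 0 := by
    intro s hs
    have h0 := deriv_inner_zero_of_const hI hT hc s hs
    rw [(hfr s hs).1] at h0
    rw [inner_smul_left] at h0
    simpa [hκ0] using h0
  -- ⟪B, U⟫ = κ * c / τ on I
  have hBU : ∀ s ∈ I, ⟪B s, U⟫ = κ * c / τ := by
    intro s hs
    have h0 := deriv_inner_zero_of_const hI hN hNU s hs
    rw [(hfr s hs).2.1] at h0
    rw [inner_add_left, inner_smul_left, inner_smul_left, hc s hs] at h0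
    simp only [RCLike.star_def, conj_trivial] at h0
    rw [eq_div_iff hτ0]
    linarith
  -- ⟪E, U⟫ = 0 on I
  have hEU : ∀ s ∈ I, ⟪E s, U⟫ = 0 := by
    intro s hs
    have h0 := deriv_inner_zero_of_const hI hB hBU s hs
    rw [(hfr s hs).2.2.1] at h0
    rw [inner_add_left, inner_smul_left, inner_smul_left, hNU s hs] at h0
    simp only [mul_zero, neg_zero, zero_add, RCLike.star_def, conj_trivial] at h0
    exact (mul_eq_zero.mp h0).resolve_left hσ0
  -- ⟪B, U⟫ = 0 on I
  have hBU0 : ∀ s ∈ I, ⟪B s, U⟫ = 0 := by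
    intro s hs
    have h0 := deriv_inner_zero_of_const hI hE hEU s hs
    rw [(hfr s hs).2.2.2] at h0
    rw [inner_smul_left] at h0
    simpa [hσ0] using h0
  obtain ⟨s₀, hs₀, -, -, -⟩ := hne
  have hc0 : c = 0 := by
    have h1 := hBU s₀ hs₀
    have h2 := hBU0 s₀ hs₀
    rw [h2] at h1
    field_simp at h1
    have h1 : κ = 0 ∨ c = 0 := mul_eq_zero.mp (by linarith)
    rcases h1 with h | h
    · exact absurd h hκ0
    · exact h
  -- U is orthogonal to an orthonormal basis, hence zero
  have hon := horth s₀ hs₀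
  have hli := hon.linearIndependent
  have hspan : Submodule.span ℝ (Set.range ![T s₀, N s₀, B s₀, E s₀]) = ⊤ := by
    apply LinearIndependent.span_eq_top_of_card_eq_finrank hli
    simp [finrank_euclideanSpace]
  have hmem : U ∈ (Submodule.span ℝ (Set.range ![T s₀, N s₀, B s₀, E s₀]))ᗮ := by
    rw [Submodule.mem_orthogonal]
    intro v hv
    apply Submodule.span_induction (p := fun v _ => ⟪v, U⟫ = 0) ?_ ?_ ?_ ?_ hv
    · rintro x ⟨i, rfl⟩
      fin_cases i
      · simpa [hc0] using hc s₀ hs₀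
      · simpa using hNU s₀ hs₀
      · simpa using hBU0 s₀ hs₀
      · simpa using hEU s₀ hs₀
    · simp
    · intro x y _ _ hx hy; rw [inner_add_left, hx, hy, add_zero]
    · intro a x _ hx; rw [inner_smul_left, hx, mul_zero]
  rw [hspan, Submodule.top_orthogonal_eq_bot, Submodule.mem_bot] at hmem
  exact hU hmem
end

section
/- Let α be a Frenet curve on a nondegenerate open interval I whose curvatures κ, τ, σ are nonzero constants (a helix/W-curve). Then α is not a 3-type slant helix: there is no nonzero vector U ∈ E⁴ such that s ↦ ⟪E(s), U⟫ is constant on I. -/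
open scoped RealInnerProductSpace

local notation "E4" => EuclideanSpace ℝ (Fin 4)

private lemma deriv_inner_zero (I : Set ℝ) (hI : IsOpen I)
    (f : ℝ → EuclideanSpace ℝ (Fin 4)) (hf : ContDiff ℝ (⊤ : ℕ∞) f)
    (U : EuclideanSpace ℝ (Fin 4)) (c : ℝ)
    (hc : ∀ s ∈ I, ⟪f s, U⟫ = c) :
    ∀ s ∈ I, ⟪deriv f s, U⟫ = 0 := by
  intro s hs
  have hd : HasDerivAt (fun t => ⟪f t, U⟫) (⟪f s, (0:EuclideanSpace ℝ (Fin 4))⟫ + ⟪deriv f s, U⟫) s :=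
    ((hf.differentiable (by simp) s).hasDerivAt).inner ℝ (hasDerivAt_const s U)
  have heq : (fun t => ⟪f t, U⟫) =ᶠ[nhds s] (fun _ => c) := by
    filter_upwards [hI.mem_nhds hs] with t ht using hc t ht
  have h0 : deriv (fun t => ⟪f t, U⟫) s = 0 := by
    rw [heq.deriv_eq, deriv_const]
  have := hd.deriv
  rw [h0] at this
  simpa using this.symm

/-- A helix (W-curve) in `E⁴`, i.e. a Frenet curve whose curvatures
`κ, τ, σ` are nonzero constants, cannot be a 3-type slant helix: no nonzero direction `U`
makes a constant angle with the trinormal on `I`. -/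
theorem helix_not_slant_helix
    (I : Set ℝ) (hI : IsOpen I) (hne : I.Nontrivial)
    (α T N B E : ℝ → E4) (κ τ σ : ℝ)
    (hα : ContDiff ℝ (⊤ : ℕ∞) α) (hT : ContDiff ℝ (⊤ : ℕ∞) T) (hN : ContDiff ℝ (⊤ : ℕ∞) N)
    (hB : ContDiff ℝ (⊤ : ℕ∞) B) (hE : ContDiff ℝ (⊤ : ℕ∞) E)
    (horth : ∀ s ∈ I, Orthonormal ℝ ![T s, N s, B s, E s])
    (hTα : ∀ s ∈ I, T s = deriv α s)
    (hfr : ∀ s ∈ I,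
      deriv T s = κ • N s ∧
      deriv N s = (-κ) • T s + τ • B s ∧
      deriv B s = (-τ) • N s + σ • E s ∧
      deriv E s = (-σ) • B s)
    (hκ0 : κ ≠ 0) (hτ0 : τ ≠ 0) (hσ0 : σ ≠ 0) :
    ¬ ∃ U : E4, U ≠ 0 ∧ ∃ c : ℝ, ∀ s ∈ I, ⟪E s, U⟫ = c := by
  rintro ⟨U, hU, c, hc⟩
  -- step 1: ⟪B s, U⟫ = 0 on I
  have hBU : ∀ s ∈ I, ⟪B s, U⟫ = 0 := by
    intro s hs
    have h := deriv_inner_zero I hI E hE U c hc s hs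
    rw [(hfr s hs).2.2.2] at h
    simp only [inner_smul_left, RCLike.star_def, conj_trivial] at h
    rcases mul_eq_zero.mp h with h | h
    · exact absurd (neg_eq_zero.mp h) hσ0
    · exact h
  -- step 2: ⟪N s, U⟫ = σ*c/τ on I
  have hNU : ∀ s ∈ I, ⟪N s, U⟫ = σ * c / τ := by
    intro s hs
    have h := deriv_inner_zero I hI B hB U 0 hBU s hs
    rw [(hfr s hs).2.2.1] at h
    rw [inner_add_left, inner_smul_left, inner_smul_left, hc s hs] at h
    simp only [conj_trivial] at h
    rw [eq_div_iff hτ0]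
    linarith
  -- step 3: ⟪T s, U⟫ = 0 on I
  have hTU : ∀ s ∈ I, ⟪T s, U⟫ = 0 := by
    intro s hs
    have h := deriv_inner_zero I hI N hN U (σ * c / τ) hNU s hs
    rw [(hfr s hs).2.1] at h
    rw [inner_add_left, inner_smul_left, inner_smul_left, hBU s hs] at h
    simp only [conj_trivial, mul_zero, add_zero] at h
    rcases mul_eq_zero.mp h with h | h
    · exact absurd (neg_eq_zero.mp h) hκ0
    · exact h
  -- step 4: ⟪N s, U⟫ = 0 on I
  have hNU0 : ∀ s ∈ I, ⟪N s, U⟫ = 0 := by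
    intro s hs
    have h := deriv_inner_zero I hI T hT U 0 hTU s hs
    rw [(hfr s hs).1, inner_smul_left] at h
    simp only [conj_trivial] at h
    exact (mul_eq_zero.mp h).resolve_left hκ0
  -- pick a point
  obtain ⟨s₀, hs₀, -⟩ := hne
  -- the frame at s₀ is a basis
  have hON := horth s₀ hs₀
  have hli := hON.linearIndependent
  have hcard : Fintype.card (Fin 4) = Module.finrank ℝ (EuclideanSpace ℝ (Fin 4)) := by
    simp [finrank_euclideanSpace_fin]
  let b := basisOfLinearIndependentOfCardEqFinrank hli hcard
  have hb : ⇑b = ![T s₀, N s₀, B s₀, E s₀] :=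
    coe_basisOfLinearIndependentOfCardEqFinrank hli hcard
  -- U is orthogonal to every basis vector
  have hc0 : c = 0 := by
    have h1 : σ * c / τ = 0 := by rw [← hNU s₀ hs₀, hNU0 s₀ hs₀]
    have h2 := (div_eq_zero_iff.mp h1).resolve_right hτ0
    exact (mul_eq_zero.mp h2).resolve_left hσ0
  have horthU : ∀ i : Fin 4, ⟪b i, U⟫ = 0 := by
    intro i
    rw [hb]
    fin_cases i
    · exact hTU s₀ hs₀
    · exact hNU0 s₀ hs₀
    · exact hBU s₀ hs₀
    · show ⟪E s₀, U⟫ = 0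
      rw [hc s₀ hs₀, hc0]
  -- hence U = 0
  apply hU
  have hzero : ((innerSL ℝ U).toLinearMap : EuclideanSpace ℝ (Fin 4) →ₗ[ℝ] ℝ) = 0 := by
    apply b.ext
    intro i
    simp only [ContinuousLinearMap.coe_coe, innerSL_apply_apply, LinearMap.zero_apply]
    rw [real_inner_comm]
    exact horthU i
  have hUU : ⟪U, U⟫ = 0 := by
    have := LinearMap.congr_fun hzero U
    simpa using this
  exact inner_self_eq_zero.mp hUU
end

section
/- Let α be a Frenet curve on a nondegenerate open interval I whose curvatures κ, τ, σ are positive constants (a helix/W-curve). If there exist m ∈ E⁴ and r > 0 with ‖α(s) − m‖ = r for all s ∈ I (α lies on a hypersphere), then r = √(τ² + σ²)/(κ·σ). -/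
open scoped RealInnerProductSpace

local notation "E4" => EuclideanSpace ℝ (Fin 4)

/-- If a helix (W-curve) in `E⁴`, i.e. a Frenet curve whose curvatures
`κ, τ, σ` are positive constants, lies on a hypersphere of radius `r > 0`, then
`r = √(τ² + σ²)/(κσ)`. -/
theorem helix_on_sphere_radius
    (I : Set ℝ) (hI : IsOpen I) (hne : I.Nontrivial)
    (α T N B E : ℝ → E4) (κ τ σ : ℝ)
    (hα : ContDiff ℝ (⊤ : ℕ∞) α) (hT : ContDiff ℝ (⊤ : ℕ∞) T) (hN : ContDiff ℝ (⊤ : ℕ∞) N)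
    (hB : ContDiff ℝ (⊤ : ℕ∞) B) (hE : ContDiff ℝ (⊤ : ℕ∞) E)
    (horth : ∀ s ∈ I, Orthonormal ℝ ![T s, N s, B s, E s])
    (hTα : ∀ s ∈ I, T s = deriv α s)
    (hfr : ∀ s ∈ I,
      deriv T s = κ • N s ∧
      deriv N s = (-κ) • T s + τ • B s ∧
      deriv B s = (-τ) • N s + σ • E s ∧
      deriv E s = (-σ) • B s)
    (hκ0 : 0 < κ) (hτ0 : 0 < τ) (hσ0 : 0 < σ)
    (m : E4) (r : ℝ) (hr : 0 < r)
    (hsphere : ∀ s ∈ I, ‖α s - m‖ = r) :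
    r = Real.sqrt (τ ^ 2 + σ ^ 2) / (κ * σ) := by
  have hαd : Differentiable ℝ α := hα.differentiable (by simp)
  have hTd : Differentiable ℝ T := hT.differentiable (by simp)
  have hNd : Differentiable ℝ N := hN.differentiable (by simp)
  have hBd : Differentiable ℝ B := hB.differentiable (by simp)
  have hEd : Differentiable ℝ E := hE.differentiable (by simp)
  set P : ℝ → E4 := fun s => α s - m with hP
  have hPd : ∀ s ∈ I, HasDerivAt P (T s) s := by
    intro s hs
    have := ((hαd s).hasDerivAt).sub_const m
    rwa [← hTα s hs] at this
  -- derivative of a function constant on I vanishes on I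
  have hconst : ∀ (f : ℝ → ℝ) (c : ℝ), (∀ s ∈ I, f s = c) → ∀ s ∈ I, deriv f s = 0 := by
    intro f c hf s hs
    have hev : f =ᶠ[nhds s] fun _ => c :=
      Filter.eventuallyEq_of_mem (hI.mem_nhds hs) hf
    rw [hev.deriv_eq, deriv_const]
  -- orthonormality facts
  have hTT : ∀ s ∈ I, ⟪T s, T s⟫ = 1 := by
    intro s hs
    have := (horth s hs).1 0
    simp only [Matrix.cons_val_zero] at this
    rw [real_inner_self_eq_norm_sq, this, one_pow]
  have hTN : ∀ s ∈ I, ⟪T s, N s⟫ = 0 := by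
    intro s hs
    have := (horth s hs).2 (i := 0) (j := 1) (by decide)
    simpa using this
  have hTB : ∀ s ∈ I, ⟪T s, B s⟫ = 0 := by
    intro s hs
    have := (horth s hs).2 (i := 0) (j := 2) (by decide)
    simpa using this
  -- Step 1: ⟪P, T⟫ = 0 on I
  have h1 : ∀ s ∈ I, ⟪P s, T s⟫ = 0 := by
    intro s hs
    have hds : HasDerivAt (fun t => ⟪P t, P t⟫) (⟪P s, T s⟫ + ⟪T s, P s⟫) s :=
      (hPd s hs).inner ℝ (hPd s hs)
    have h0 : deriv (fun t => ⟪P t, P t⟫) s = 0 := by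
      apply hconst _ (r ^ 2) _ s hs
      intro t ht
      rw [real_inner_self_eq_norm_sq, hsphere t ht]
    rw [hds.deriv, real_inner_comm (P s) (T s)] at h0
    linarith
  -- Step 2: ⟪P, N⟫ = -1/κ on I
  have h2 : ∀ s ∈ I, ⟪P s, N s⟫ = -1 / κ := by
    intro s hs
    have hds : HasDerivAt (fun t => ⟪P t, T t⟫) (⟪P s, deriv T s⟫ + ⟪T s, T s⟫) s :=
      (hPd s hs).inner ℝ (hTd s).hasDerivAt
    have h0 : deriv (fun t => ⟪P t, T t⟫) s = 0 := hconst _ 0 h1 s hs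
    rw [hds.deriv, (hfr s hs).1, real_inner_smul_right, hTT s hs] at h0
    set y := ⟪P s, N s⟫ with hy
    rw [eq_div_iff (ne_of_gt hκ0)]
    linarith
  -- Step 3: ⟪P, B⟫ = 0 on I
  have h3 : ∀ s ∈ I, ⟪P s, B s⟫ = 0 := by
    intro s hs
    have hds : HasDerivAt (fun t => ⟪P t, N t⟫) (⟪P s, deriv N s⟫ + ⟪T s, N s⟫) s :=
      (hPd s hs).inner ℝ (hNd s).hasDerivAt
    have h0 : deriv (fun t => ⟪P t, N t⟫) s = 0 := hconst _ (-1 / κ) h2 s hs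
    rw [hds.deriv, (hfr s hs).2.1, inner_add_right, real_inner_smul_right,
      real_inner_smul_right, h1 s hs, hTN s hs] at h0
    have : τ * ⟪P s, B s⟫ = 0 := by linarith
    rcases mul_eq_zero.1 this with h | h
    · exact absurd h (ne_of_gt hτ0)
    · exact h
  -- Step 4: ⟪P, E⟫ = -τ/(κσ) on I
  have h4 : ∀ s ∈ I, ⟪P s, E s⟫ = -τ / (κ * σ) := by
    intro s hs
    have hds : HasDerivAt (fun t => ⟪P t, B t⟫) (⟪P s, deriv B s⟫ + ⟪T s, B s⟫) s :=
      (hPd s hs).inner ℝ (hBd s).hasDerivAt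
    have h0 : deriv (fun t => ⟪P t, B t⟫) s = 0 := hconst _ 0 h3 s hs
    rw [hds.deriv, (hfr s hs).2.2.1, inner_add_right, real_inner_smul_right,
      real_inner_smul_right, h2 s hs, hTB s hs] at h0
    have hκσ : (0:ℝ) < κ * σ := by positivity
    set y := ⟪P s, E s⟫ with hy
    rw [eq_div_iff (ne_of_gt hκσ)]
    field_simp at h0
    nlinarith
  -- pick a point of I, get an orthonormal basis
  obtain ⟨s₀, hs₀, -, -, -⟩ := hne
  have hon := horth s₀ hs₀
  have hli := hon.linearIndependent
  have hcard : Fintype.card (Fin 4) = Module.finrank ℝ E4 := by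
    simp [finrank_euclideanSpace]
  let b := basisOfLinearIndependentOfCardEqFinrank hli hcard
  have hbcoe : ⇑b = ![T s₀, N s₀, B s₀, E s₀] :=
    coe_basisOfLinearIndependentOfCardEqFinrank hli hcard
  have hbon : Orthonormal ℝ ⇑b := by rw [hbcoe]; exact hon
  let ob := b.toOrthonormalBasis hbon
  have hob : ∀ i, ob i = ![T s₀, N s₀, B s₀, E s₀] i := by
    intro i
    rw [Module.Basis.coe_toOrthonormalBasis, hbcoe]
  have hsum := ob.sum_inner_mul_inner (P s₀) (P s₀)
  have hPP : ⟪P s₀, P s₀⟫ = r ^ 2 := by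
    rw [real_inner_self_eq_norm_sq, hsphere s₀ hs₀]
  rw [hPP, Fin.sum_univ_four, hob 0, hob 1, hob 2, hob 3] at hsum
  simp only [Matrix.cons_val_zero, Matrix.cons_val_one, Matrix.head_cons,
    Matrix.cons_val_two, Matrix.tail_cons, Matrix.cons_val_three] at hsum
  rw [real_inner_comm (P s₀) (T s₀), real_inner_comm (P s₀) (N s₀),
    real_inner_comm (P s₀) (B s₀), real_inner_comm (P s₀) (E s₀),
    h1 s₀ hs₀, h2 s₀ hs₀, h3 s₀ hs₀, h4 s₀ hs₀] at hsum
  -- now r ^ 2 = (σ² + τ²)/(κσ)²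
  have hκσ : (0:ℝ) < κ * σ := by positivity
  have hr2 : r ^ 2 = (τ ^ 2 + σ ^ 2) / (κ * σ) ^ 2 := by
    rw [← hsum]
    field_simp
    ring
  have : r = Real.sqrt (r ^ 2) := (Real.sqrt_sq hr.le).symm
  rw [this, hr2, Real.sqrt_div (by positivity), Real.sqrt_sq hκσ.le]
end

section
/- Let α be a Frenet curve on a nondegenerate open interval I with κ nowhere zero on I, and suppose α is a ccr-curve: τ(s) = a·κ(s) and σ(s) = b·κ(s) on I for nonzero real constants a, b. Then α is not a generalized helix: there is no nonzero vector U ∈ E⁴ such that s ↦ ⟪T(s), U⟫ is constant on I. -/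
open scoped RealInnerProductSpace

local notation "E4" => EuclideanSpace ℝ (Fin 4)

private lemma deriv_inner_const {f : ℝ → EuclideanSpace ℝ (Fin 4)} {U : EuclideanSpace ℝ (Fin 4)}
    (hf : ContDiff ℝ (⊤ : ℕ∞) f) (s : ℝ) :
    deriv (fun t => ⟪f t, U⟫) s = ⟪deriv f s, U⟫ := by
  have h := ((hf.differentiable (by simp) s).hasDerivAt.inner ℝ (hasDerivAt_const s U))
  simpa using h.deriv

private lemma deriv_eq_zero_of_const_on {f : ℝ → ℝ} {I : Set ℝ} (hI : IsOpen I) {c : ℝ}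
    (h : ∀ s ∈ I, f s = c) {s : ℝ} (hs : s ∈ I) : deriv f s = 0 := by
  have heq : f =ᶠ[nhds s] fun _ => c :=
    Filter.eventuallyEq_of_mem (hI.mem_nhds hs) h
  rw [heq.deriv_eq, deriv_const]

/-- A ccr-curve in `E⁴` (a Frenet curve with `κ` nowhere zero and
`τ = a·κ`, `σ = b·κ` on `I` for nonzero constants `a, b`) cannot be a generalized helix. -/
theorem ccr_not_generalized_helix
    (I : Set ℝ) (hI : IsOpen I) (hne : I.Nontrivial)
    (α T N B E : ℝ → E4) (κ τ σ : ℝ → ℝ)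
    (hα : ContDiff ℝ (⊤ : ℕ∞) α) (hT : ContDiff ℝ (⊤ : ℕ∞) T) (hN : ContDiff ℝ (⊤ : ℕ∞) N)
    (hB : ContDiff ℝ (⊤ : ℕ∞) B) (hE : ContDiff ℝ (⊤ : ℕ∞) E)
    (hκ : ContDiff ℝ (⊤ : ℕ∞) κ) (hτ : ContDiff ℝ (⊤ : ℕ∞) τ) (hσ : ContDiff ℝ (⊤ : ℕ∞) σ)
    (horth : ∀ s ∈ I, Orthonormal ℝ ![T s, N s, B s, E s])
    (hTα : ∀ s ∈ I, T s = deriv α s)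
    (hfr : ∀ s ∈ I,
      deriv T s = κ s • N s ∧
      deriv N s = (-κ s) • T s + τ s • B s ∧
      deriv B s = (-τ s) • N s + σ s • E s ∧
      deriv E s = (-σ s) • B s)
    (hκ0 : ∀ s ∈ I, κ s ≠ 0)
    (a b : ℝ) (ha : a ≠ 0) (hb : b ≠ 0)
    (hccr1 : ∀ s ∈ I, τ s = a * κ s) (hccr2 : ∀ s ∈ I, σ s = b * κ s) :
    ¬ ∃ U : E4, U ≠ 0 ∧ ∃ c : ℝ, ∀ s ∈ I, ⟪T s, U⟫ = c := by
  rintro ⟨U, hU, c, hc⟩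
  -- Step 1: ⟪N, U⟫ = 0 on I
  have hNU : ∀ s ∈ I, ⟪N s, U⟫ = 0 := by
    intro s hs
    have h1 : deriv (fun t => ⟪T t, U⟫) s = 0 := deriv_eq_zero_of_const_on hI hc hs
    rw [deriv_inner_const hT, (hfr s hs).1] at h1
    rw [real_inner_smul_left] at h1
    exact (mul_eq_zero.1 h1).resolve_left (hκ0 s hs)
  -- Step 2: ⟪B, U⟫ = c / a on I
  have hBU : ∀ s ∈ I, ⟪B s, U⟫ = c / a := by
    intro s hs
    have h1 : deriv (fun t => ⟪N t, U⟫) s = 0 := deriv_eq_zero_of_const_on hI hNU hs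
    rw [deriv_inner_const hN, (hfr s hs).2.1] at h1
    rw [inner_add_left, real_inner_smul_left, real_inner_smul_left, hc s hs,
      hccr1 s hs] at h1
    have h2 : κ s * (a * ⟪B s, U⟫) = κ s * c := by linear_combination h1
    have h3 := mul_left_cancel₀ (hκ0 s hs) h2
    rw [eq_div_iff ha]
    linear_combination h3
  -- Step 3: ⟪E, U⟫ = 0 on I
  have hEU : ∀ s ∈ I, ⟪E s, U⟫ = 0 := by
    intro s hs
    have h1 : deriv (fun t => ⟪B t, U⟫) s = 0 := deriv_eq_zero_of_const_on hI hBU hs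
    rw [deriv_inner_const hB, (hfr s hs).2.2.1] at h1
    rw [inner_add_left, real_inner_smul_left, real_inner_smul_left, hNU s hs,
      hccr2 s hs] at h1
    have hbκ : b * κ s ≠ 0 := mul_ne_zero hb (hκ0 s hs)
    have : (b * κ s) * ⟪E s, U⟫ = 0 := by linarith
    exact (mul_eq_zero.1 this).resolve_left hbκ
  -- Step 4: ⟪B, U⟫ = 0, hence c = 0 and ⟪T, U⟫ = 0
  obtain ⟨s0, hs0, _, _, _⟩ := hne
  have hBU0 : ⟪B s0, U⟫ = 0 := by
    have h1 : deriv (fun t => ⟪E t, U⟫) s0 = 0 := deriv_eq_zero_of_const_on hI hEU hs0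
    rw [deriv_inner_const hE, (hfr s0 hs0).2.2.2] at h1
    rw [real_inner_smul_left] at h1
    have hbκ : -σ s0 ≠ 0 := by
      rw [hccr2 s0 hs0]; exact neg_ne_zero.2 (mul_ne_zero hb (hκ0 s0 hs0))
    exact (mul_eq_zero.1 h1).resolve_left hbκ
  have hc0 : c = 0 := by
    have := hBU s0 hs0
    rw [hBU0] at this
    field_simp at this
    simpa using this.symm
  have hTU0 : ⟪T s0, U⟫ = 0 := by rw [hc s0 hs0, hc0]
  -- Step 5: U is orthogonal to a spanning family, so U = 0
  have horth0 := horth s0 hs0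
  have hspan : Submodule.span ℝ (Set.range ![T s0, N s0, B s0, E s0]) = ⊤ :=
    horth0.linearIndependent.span_eq_top_of_card_eq_finrank (by simp)
  have hall : ∀ x ∈ Submodule.span ℝ (Set.range ![T s0, N s0, B s0, E s0]),
      ⟪x, U⟫ = 0 := by
    intro x hx
    induction hx using Submodule.span_induction with
    | mem y hy =>
      obtain ⟨i, rfl⟩ := hy
      fin_cases i
      · simpa using hTU0
      · simpa using hNU s0 hs0
      · simpa using hBU0
      · simpa using hEU s0 hs0
    | zero => simp
    | add x y _ _ hx hy => rw [inner_add_left, hx, hy, add_zero]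
    | smul r x _ hx => rw [real_inner_smul_left, hx, mul_zero]
  have hUzero : ⟪U, U⟫ = 0 := hall U (by rw [hspan]; trivial)
  exact hU (inner_self_eq_zero.1 hUzero)
end

section
/- Let α be a Frenet curve on a nondegenerate open interval I with κ nowhere zero on I, and suppose α is a ccr-curve: τ(s) = a·κ(s) and σ(s) = b·κ(s) on I for nonzero real constants a, b. Then α is not a 3-type slant helix: there is no nonzero vector U ∈ E⁴ such that s ↦ ⟪E(s), U⟫ is constant on I. -/
open scoped RealInnerProductSpace

local notation "E4" => EuclideanSpace ℝ (Fin 4)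

private lemma aux_deriv_zero {I : Set ℝ} (hI : IsOpen I) {f : ℝ → ℝ} {c : ℝ}
    (h : ∀ s ∈ I, f s = c) {s : ℝ} (hs : s ∈ I) : deriv f s = 0 := by
  have hev : f =ᶠ[nhds s] fun _ => c := Filter.eventually_of_mem (hI.mem_nhds hs) h
  rw [hev.deriv_eq, deriv_const]

private lemma aux_deriv_inner {f : ℝ → E4} (hf : ContDiff ℝ (⊤ : ℕ∞) f) (U : E4) (s : ℝ) :
    deriv (fun t => ⟪f t, U⟫) s = ⟪deriv f s, U⟫ := by
  have h1 := (hf.differentiable (by simp) s).hasDerivAt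
  have h2 := h1.inner ℝ (hasDerivAt_const s U)
  simpa using h2.deriv

/-- A ccr-curve in `E⁴` (a Frenet curve with `κ` nowhere zero and
`τ = a·κ`, `σ = b·κ` on `I` for nonzero constants `a, b`) cannot be a 3-type slant helix. -/
theorem ccr_not_slant_helix
    (I : Set ℝ) (hI : IsOpen I) (hne : I.Nontrivial)
    (α T N B E : ℝ → E4) (κ τ σ : ℝ → ℝ)
    (hα : ContDiff ℝ (⊤ : ℕ∞) α) (hT : ContDiff ℝ (⊤ : ℕ∞) T) (hN : ContDiff ℝ (⊤ : ℕ∞) N)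
    (hB : ContDiff ℝ (⊤ : ℕ∞) B) (hE : ContDiff ℝ (⊤ : ℕ∞) E)
    (hκ : ContDiff ℝ (⊤ : ℕ∞) κ) (hτ : ContDiff ℝ (⊤ : ℕ∞) τ) (hσ : ContDiff ℝ (⊤ : ℕ∞) σ)
    (horth : ∀ s ∈ I, Orthonormal ℝ ![T s, N s, B s, E s])
    (hTα : ∀ s ∈ I, T s = deriv α s)
    (hfr : ∀ s ∈ I,
      deriv T s = κ s • N s ∧
      deriv N s = (-κ s) • T s + τ s • B s ∧
      deriv B s = (-τ s) • N s + σ s • E s ∧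
      deriv E s = (-σ s) • B s)
    (hκ0 : ∀ s ∈ I, κ s ≠ 0)
    (a b : ℝ) (ha : a ≠ 0) (hb : b ≠ 0)
    (hccr1 : ∀ s ∈ I, τ s = a * κ s) (hccr2 : ∀ s ∈ I, σ s = b * κ s) :
    ¬ ∃ U : E4, U ≠ 0 ∧ ∃ c : ℝ, ∀ s ∈ I, ⟪E s, U⟫ = c := by
  rintro ⟨U, hU, c, hc⟩
  -- Step 1: ⟪B, U⟫ = 0 on I
  have hBU : ∀ s ∈ I, ⟪B s, U⟫ = 0 := by
    intro s hs
    have h0 : deriv (fun t => ⟪E t, U⟫) s = 0 := aux_deriv_zero hI hc hs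
    rw [aux_deriv_inner hE U s, (hfr s hs).2.2.2, real_inner_smul_left] at h0
    have hσs : σ s ≠ 0 := by rw [hccr2 s hs]; exact mul_ne_zero hb (hκ0 s hs)
    have : -σ s ≠ 0 := neg_ne_zero.mpr hσs
    exact (mul_eq_zero.mp h0).resolve_left this
  -- Step 2: ⟪N, U⟫ = (b/a)·c on I
  have hNU : ∀ s ∈ I, ⟪N s, U⟫ = b / a * c := by
    intro s hs
    have h0 : deriv (fun t => ⟪B t, U⟫) s = 0 := aux_deriv_zero hI hBU hs
    rw [aux_deriv_inner hB U s, (hfr s hs).2.2.1, inner_add_left, real_inner_smul_left,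
      real_inner_smul_left, hc s hs, hccr1 s hs, hccr2 s hs] at h0
    have hκs := hκ0 s hs
    have h1 : a * ⟪N s, U⟫ = b * c :=
      mul_left_cancel₀ hκs (by linear_combination -h0)
    rw [div_mul_eq_mul_div, eq_div_iff ha]
    linear_combination h1
  -- Step 3: ⟪T, U⟫ = 0 on I
  have hTU : ∀ s ∈ I, ⟪T s, U⟫ = 0 := by
    intro s hs
    have h0 : deriv (fun t => ⟪N t, U⟫) s = 0 := aux_deriv_zero hI hNU hs
    rw [aux_deriv_inner hN U s, (hfr s hs).2.1, inner_add_left, real_inner_smul_left,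
      real_inner_smul_left, hBU s hs] at h0
    have hκs := hκ0 s hs
    have : -κ s * ⟪T s, U⟫ = 0 := by linarith [h0]
    exact (mul_eq_zero.mp this).resolve_left (neg_ne_zero.mpr hκs)
  -- Step 4: ⟪N, U⟫ = 0 on I, hence c = 0
  obtain ⟨s₀, hs₀, -⟩ := hne
  have hNU0 : ⟪N s₀, U⟫ = 0 := by
    have h0 : deriv (fun t => ⟪T t, U⟫) s₀ = 0 := aux_deriv_zero hI hTU hs₀
    rw [aux_deriv_inner hT U s₀, (hfr s₀ hs₀).1, real_inner_smul_left] at h0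
    exact (mul_eq_zero.mp h0).resolve_left (hκ0 s₀ hs₀)
  have hc0 : c = 0 := by
    have := hNU s₀ hs₀
    rw [hNU0] at this
    field_simp at this
    exact (mul_eq_zero.mp (by rw [zero_mul] at this; exact this.symm)).resolve_left hb
  -- Step 5: U is orthogonal to an orthonormal basis, so U = 0
  have horth₀ := horth s₀ hs₀
  have hcard : Fintype.card (Fin 4) = Module.finrank ℝ E4 := by simp
  let bas := basisOfLinearIndependentOfCardEqFinrank horth₀.linearIndependent hcard
  have hbas : ⇑bas = ![T s₀, N s₀, B s₀, E s₀] :=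
    coe_basisOfLinearIndependentOfCardEqFinrank _ _
  have hmem : U ∈ (Submodule.span ℝ (Set.range ![T s₀, N s₀, B s₀, E s₀]))ᗮ := by
    rw [Submodule.mem_orthogonal]
    intro v hv
    induction hv using Submodule.span_induction with
    | mem x hx =>
      obtain ⟨i, rfl⟩ := hx
      fin_cases i
      · simpa using hTU s₀ hs₀
      · simpa using hNU0
      · simpa using hBU s₀ hs₀
      · simpa [hc0] using hc s₀ hs₀
    | zero => simp
    | add x y _ _ hx hy => rw [inner_add_left, hx, hy, add_zero]
    | smul r x _ hx => rw [real_inner_smul_left, hx, mul_zero]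
  have hspan : Submodule.span ℝ (Set.range ![T s₀, N s₀, B s₀, E s₀]) = ⊤ := by
    rw [← hbas]; exact bas.span_eq
  rw [hspan, Submodule.top_orthogonal_eq_bot, Submodule.mem_bot] at hmem
  exact hU hmem
end

section
/- For every s ∈ I, the Bertrand mate ξ of the W-curve δ satisfies ‖ξ'(s)‖²·ξ''(s) − ⟪ξ'(s), ξ''(s)⟫·ξ'(s) = K²·(P·N(s) + λτσ·E(s)). Consequently the first curvature of ξ, defined by the regular-curve formula κ_ξ(s) = ‖ ‖ξ'(s)‖²·ξ''(s) − ⟪ξ'(s), ξ''(s)⟫·ξ'(s) ‖ / ‖ξ'(s)‖⁴, equals L/K², and the unit principal normal N_ξ(s) = (‖ξ'‖²ξ'' − ⟪ξ', ξ''⟫ξ')/‖‖ξ'‖²ξ'' − ⟪ξ', ξ''⟫ξ'‖ equals (P·N(s) + λτσ·E(s))/L. -/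
open scoped RealInnerProductSpace

local notation "E4" => EuclideanSpace ℝ (Fin 4)

/-- For the Bertrand mate `ξ = δ + λN` of a W-curve `δ` in `E⁴`:
`‖ξ'‖²ξ'' − ⟪ξ', ξ''⟫ξ' = K²(P·N + λτσ·E)`; hence the first curvature
`κ_ξ = ‖‖ξ'‖²ξ'' − ⟪ξ', ξ''⟫ξ'‖/‖ξ'‖⁴` equals `L/K²` and the unit principal normal
equals `(P·N + λτσ·E)/L`. -/
theorem bertrand_mate_normal_and_first_curvature
    (I : Set ℝ) (hI : IsOpen I)
    (δ T N B E : ℝ → E4) (κ τ σ : ℝ)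
    (hδ : ContDiff ℝ (⊤ : ℕ∞) δ) (hT : ContDiff ℝ (⊤ : ℕ∞) T) (hN : ContDiff ℝ (⊤ : ℕ∞) N)
    (hB : ContDiff ℝ (⊤ : ℕ∞) B) (hE : ContDiff ℝ (⊤ : ℕ∞) E)
    (horth : ∀ s ∈ I, Orthonormal ℝ ![T s, N s, B s, E s])
    (hTδ : ∀ s ∈ I, T s = deriv δ s)
    (hfr : ∀ s ∈ I,
      deriv T s = κ • N s ∧
      deriv N s = (-κ) • T s + τ • B s ∧
      deriv B s = (-τ) • N s + σ • E s ∧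
      deriv E s = (-σ) • B s)
    (hκ0 : 0 < κ) (hτ0 : 0 < τ) (hσ0 : 0 < σ)
    (lam : ℝ) (hlam : lam ≠ 0)
    (ξ : ℝ → E4) (hξ : ξ = fun s => δ s + lam • N s)
    (K P L M : ℝ)
    (hK : K = Real.sqrt ((1 - lam * κ) ^ 2 + (lam * τ) ^ 2))
    (hP : P = κ - lam * (κ ^ 2 + τ ^ 2))
    (hL : L = Real.sqrt (P ^ 2 + (lam * τ * σ) ^ 2))
    (hM : M = τ * (lam * (κ ^ 2 + τ ^ 2 + σ ^ 2) - κ * (1 + lam ^ 2 * σ ^ 2))) :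
    ∀ s ∈ I,
      ‖deriv ξ s‖ ^ 2 • deriv (deriv ξ) s
          - ⟪deriv ξ s, deriv (deriv ξ) s⟫ • deriv ξ s
        = K ^ 2 • (P • N s + (lam * τ * σ) • E s) ∧
      ‖‖deriv ξ s‖ ^ 2 • deriv (deriv ξ) s
          - ⟪deriv ξ s, deriv (deriv ξ) s⟫ • deriv ξ s‖ / ‖deriv ξ s‖ ^ 4
        = L / K ^ 2 ∧
      ‖‖deriv ξ s‖ ^ 2 • deriv (deriv ξ) s
          - ⟪deriv ξ s, deriv (deriv ξ) s⟫ • deriv ξ s‖⁻¹ •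
        (‖deriv ξ s‖ ^ 2 • deriv (deriv ξ) s
          - ⟪deriv ξ s, deriv (deriv ξ) s⟫ • deriv ξ s)
        = L⁻¹ • (P • N s + (lam * τ * σ) • E s) := by
  intro s hs
  have hδ' : Differentiable ℝ δ := hδ.differentiable (by simp)
  have hT' : Differentiable ℝ T := hT.differentiable (by simp)
  have hN' : Differentiable ℝ N := hN.differentiable (by simp)
  have hB' : Differentiable ℝ B := hB.differentiable (by simp)
  -- first derivative as a function
  have hdξ : ∀ t, deriv ξ t = deriv δ t + lam • deriv N t := by
    intro t
    rw [hξ]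
    rw [deriv_fun_add (f := δ) (g := fun y => lam • N y) (hδ' t) ((hN'.const_smul lam) t)]
    rw [deriv_fun_const_smul lam (hN' t)]
  have hξ'I : ∀ t ∈ I, deriv ξ t = (1 - lam * κ) • T t + (lam * τ) • B t := by
    intro t ht
    rw [hdξ t, ← hTδ t ht, (hfr t ht).2.1]
    module
  have h1 : deriv ξ s = (1 - lam * κ) • T s + (lam * τ) • B s := hξ'I s hs
  -- second derivative
  have hev : deriv ξ =ᶠ[nhds s] fun t => (1 - lam * κ) • T t + (lam * τ) • B t :=
    Filter.eventuallyEq_of_mem (hI.mem_nhds hs) hξ'I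
  have h2 : deriv (deriv ξ) s = P • N s + (lam * τ * σ) • E s := by
    rw [hev.deriv_eq]
    rw [deriv_fun_add (f := fun y => (1 - lam * κ) • T y) (g := fun y => (lam * τ) • B y) ((hT'.const_smul (1 - lam * κ)) s) ((hB'.const_smul (lam * τ)) s)]
    rw [deriv_fun_const_smul _ (hT' s), deriv_fun_const_smul _ (hB' s)]
    rw [(hfr s hs).1, (hfr s hs).2.2.1, hP]
    module
  -- orthonormality facts
  have oh := horth s hs
  have hTT : ⟪T s, T s⟫ = 1 := by
    have := oh.1 0
    simp only [Matrix.cons_val_zero] at this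
    rw [real_inner_self_eq_norm_sq, this]; norm_num
  have hNN : ⟪N s, N s⟫ = 1 := by
    have := oh.1 1
    simp only [Matrix.cons_val_one, Matrix.head_cons, Matrix.cons_val_zero] at this
    rw [real_inner_self_eq_norm_sq, this]; norm_num
  have hBB : ⟪B s, B s⟫ = 1 := by
    have := oh.1 2
    simp only [Matrix.cons_val_two, Matrix.tail_cons, Matrix.head_cons] at this
    rw [real_inner_self_eq_norm_sq, this]; norm_num
  have hEE : ⟪E s, E s⟫ = 1 := by
    have := oh.1 3
    simp only [Matrix.cons_val_three, Matrix.tail_cons, Matrix.head_cons] at this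
    rw [real_inner_self_eq_norm_sq, this]; norm_num
  have hTN : ⟪T s, N s⟫ = 0 := by simpa using oh.2 (show (0 : Fin 4) ≠ 1 by decide)
  have hTB : ⟪T s, B s⟫ = 0 := by simpa using oh.2 (show (0 : Fin 4) ≠ 2 by decide)
  have hTE : ⟪T s, E s⟫ = 0 := by simpa using oh.2 (show (0 : Fin 4) ≠ 3 by decide)
  have hBN : ⟪B s, N s⟫ = 0 := by simpa using oh.2 (show (2 : Fin 4) ≠ 1 by decide)
  have hBE : ⟪B s, E s⟫ = 0 := by simpa using oh.2 (show (2 : Fin 4) ≠ 3 by decide)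
  have hNE : ⟪N s, E s⟫ = 0 := by simpa using oh.2 (show (1 : Fin 4) ≠ 3 by decide)
  have hBT : ⟪B s, T s⟫ = 0 := by simpa using oh.2 (show (2 : Fin 4) ≠ 0 by decide)
  have hEN : ⟪E s, N s⟫ = 0 := by simpa using oh.2 (show (3 : Fin 4) ≠ 1 by decide)
  -- positivity
  have hKarg : 0 < (1 - lam * κ) ^ 2 + (lam * τ) ^ 2 := by
    have h2 : 0 < (lam * τ) ^ 2 := by positivity
    linarith [sq_nonneg (1 - lam * κ)]
  have hK0 : 0 < K := hK ▸ Real.sqrt_pos.mpr hKarg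
  have hKsq : K ^ 2 = (1 - lam * κ) ^ 2 + (lam * τ) ^ 2 := by
    rw [hK, Real.sq_sqrt hKarg.le]
  have hLarg : 0 < P ^ 2 + (lam * τ * σ) ^ 2 := by
    have h2 : 0 < (lam * τ * σ) ^ 2 := by positivity
    linarith [sq_nonneg P]
  have hL0 : 0 < L := hL ▸ Real.sqrt_pos.mpr hLarg
  -- norm computations
  have hnorm1 : ‖deriv ξ s‖ ^ 2 = K ^ 2 := by
    rw [← real_inner_self_eq_norm_sq, h1, hKsq]
    simp only [inner_add_left, inner_add_right, real_inner_smul_left, real_inner_smul_right,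
      hTT, hBB, hTB, hBT]
    ring
  have hinner0 : ⟪deriv ξ s, deriv (deriv ξ) s⟫ = 0 := by
    rw [h1, h2]
    simp only [inner_add_left, inner_add_right, real_inner_smul_left, real_inner_smul_right,
      hTN, hTE, hBN, hBE]
    ring
  have hnormv : ‖P • N s + (lam * τ * σ) • E s‖ = L := by
    rw [hL, ← Real.sqrt_sq (norm_nonneg (P • N s + (lam * τ * σ) • E s))]
    congr 1
    rw [← real_inner_self_eq_norm_sq]
    simp only [inner_add_left, inner_add_right, real_inner_smul_left, real_inner_smul_right,
      hNN, hEE, hNE, hEN]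
    ring
  have heq : ‖deriv ξ s‖ ^ 2 • deriv (deriv ξ) s
      - ⟪deriv ξ s, deriv (deriv ξ) s⟫ • deriv ξ s
      = K ^ 2 • (P • N s + (lam * τ * σ) • E s) := by
    rw [hinner0, zero_smul, sub_zero, h2, hnorm1]
  refine ⟨heq, ?_, ?_⟩
  · rw [heq, norm_smul, hnormv, Real.norm_eq_abs, abs_of_pos (by positivity : (0:ℝ) < K ^ 2)]
    have h4 : ‖deriv ξ s‖ ^ 4 = (K ^ 2) ^ 2 := by
      rw [← hnorm1]; ring
    rw [h4]
    field_simp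
  · rw [heq, norm_smul, hnormv, Real.norm_eq_abs, abs_of_pos (by positivity : (0:ℝ) < K ^ 2),
      smul_smul]
    congr 1
    field_simp
end

section
/- For every s ∈ I, the orthogonal projection of ξ'''(s) onto the orthogonal complement of the span of T_ξ(s) = ((1 − λκ)T(s) + λτB(s))/K and N_ξ(s) = (P·N(s) + λτσ·E(s))/L has norm |M|/K. Consequently the second curvature of ξ, defined by τ_ξ(s) = (norm of that projection)·‖ξ'(s)‖/(K²·L), equals |M|/(K²·L). -/
open scoped RealInnerProductSpace

local notation "E4" => EuclideanSpace ℝ (Fin 4)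

/-- For the Bertrand mate `ξ = δ + λN` of a W-curve `δ` in `E⁴`,
the orthogonal projection of `ξ'''` onto the orthogonal complement of the span of
`T_ξ = ((1−λκ)T + λτB)/K` and `N_ξ = (P·N + λτσ·E)/L` has norm `|M|/K`; hence the
second curvature `τ_ξ = ‖proj‖·‖ξ'‖/(K²L)` equals `|M|/(K²L)`. -/
theorem bertrand_mate_second_curvature
    (I : Set ℝ) (hI : IsOpen I)
    (δ T N B E : ℝ → E4) (κ τ σ : ℝ)
    (hδ : ContDiff ℝ (⊤ : ℕ∞) δ) (hT : ContDiff ℝ (⊤ : ℕ∞) T) (hN : ContDiff ℝ (⊤ : ℕ∞) N)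
    (hB : ContDiff ℝ (⊤ : ℕ∞) B) (hE : ContDiff ℝ (⊤ : ℕ∞) E)
    (horth : ∀ s ∈ I, Orthonormal ℝ ![T s, N s, B s, E s])
    (hTδ : ∀ s ∈ I, T s = deriv δ s)
    (hfr : ∀ s ∈ I,
      deriv T s = κ • N s ∧
      deriv N s = (-κ) • T s + τ • B s ∧
      deriv B s = (-τ) • N s + σ • E s ∧
      deriv E s = (-σ) • B s)
    (hκ0 : 0 < κ) (hτ0 : 0 < τ) (hσ0 : 0 < σ)
    (lam : ℝ) (hlam : lam ≠ 0)
    (ξ : ℝ → E4) (hξ : ξ = fun s => δ s + lam • N s)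
    (K P L M : ℝ)
    (hK : K = Real.sqrt ((1 - lam * κ) ^ 2 + (lam * τ) ^ 2))
    (hP : P = κ - lam * (κ ^ 2 + τ ^ 2))
    (hL : L = Real.sqrt (P ^ 2 + (lam * τ * σ) ^ 2))
    (hM : M = τ * (lam * (κ ^ 2 + τ ^ 2 + σ ^ 2) - κ * (1 + lam ^ 2 * σ ^ 2))) :
    ∀ s ∈ I,
      ‖(Submodule.orthogonalProjectionOnto
          (Submodule.span ℝ
            ({K⁻¹ • ((1 - lam * κ) • T s + (lam * τ) • B s),
              L⁻¹ • (P • N s + (lam * τ * σ) • E s)} : Set E4))ᗮ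
          (deriv (deriv (deriv ξ)) s) : E4)‖ = |M| / K ∧
      ‖(Submodule.orthogonalProjectionOnto
          (Submodule.span ℝ
            ({K⁻¹ • ((1 - lam * κ) • T s + (lam * τ) • B s),
              L⁻¹ • (P • N s + (lam * τ * σ) • E s)} : Set E4))ᗮ
          (deriv (deriv (deriv ξ)) s) : E4)‖ * ‖deriv ξ s‖ / (K ^ 2 * L)
        = |M| / (K ^ 2 * L) := by
  intro s hs
  subst hM hP
  have hlt : lam * τ ≠ 0 := mul_ne_zero hlam hτ0.ne'
  have hK2 : K ^ 2 = (1 - lam * κ) ^ 2 + (lam * τ) ^ 2 := by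
    rw [hK, Real.sq_sqrt (by positivity)]
  have hKpos : 0 < K := by
    rw [hK]; exact Real.sqrt_pos.2 (by positivity)
  -- derivatives
  have hdδ := hδ.differentiable (by simp)
  have hdT := hT.differentiable (by simp)
  have hdN := hN.differentiable (by simp)
  have hdB := hB.differentiable (by simp)
  have hdE := hE.differentiable (by simp)
  have h1 : ∀ x ∈ I, deriv ξ x = (1 - lam * κ) • T x + (lam * τ) • B x := by
    intro x hx
    have : deriv ξ x = deriv δ x + lam • deriv N x := by
      rw [hξ, deriv_fun_add (hdδ x) ((hdN x).fun_const_smul lam), deriv_fun_const_smul lam (hdN x)]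
    rw [this, ← hTδ x hx, (hfr x hx).2.1]
    match_scalars <;> ring
  have h2 : ∀ x ∈ I, deriv (deriv ξ) x = (κ - lam * (κ ^ 2 + τ ^ 2)) • N x + (lam * τ * σ) • E x := by
    intro x hx
    have hev : deriv ξ =ᶠ[nhds x]
        fun t => (1 - lam * κ) • T t + (lam * τ) • B t :=
      Filter.eventuallyEq_of_mem (hI.mem_nhds hx) h1
    rw [hev.deriv_eq,
      deriv_fun_add ((hdT x).fun_const_smul (1 - lam * κ)) ((hdB x).fun_const_smul (lam * τ)),
      deriv_fun_const_smul _ (hdT x), deriv_fun_const_smul _ (hdB x),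
      (hfr x hx).1, (hfr x hx).2.2.1]
    match_scalars <;> ring
  have h3 : deriv (deriv (deriv ξ)) s
      = (-((κ - lam * (κ ^ 2 + τ ^ 2)) * κ)) • T s + ((κ - lam * (κ ^ 2 + τ ^ 2)) * τ - lam * τ * σ ^ 2) • B s := by
    have hev : deriv (deriv ξ) =ᶠ[nhds s]
        fun t => (κ - lam * (κ ^ 2 + τ ^ 2)) • N t + (lam * τ * σ) • E t :=
      Filter.eventuallyEq_of_mem (hI.mem_nhds hs) h2
    rw [hev.deriv_eq,
      deriv_fun_add ((hdN s).fun_const_smul (κ - lam * (κ ^ 2 + τ ^ 2))) ((hdE s).fun_const_smul (lam * τ * σ)),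
      deriv_fun_const_smul _ (hdN s), deriv_fun_const_smul _ (hdE s),
      (hfr s hs).2.1, (hfr s hs).2.2.2]
    match_scalars <;> ring
  -- orthonormality facts
  have key := orthonormal_iff_ite.mp (horth s hs)
  have htt : ⟪T s, T s⟫ = 1 := by simpa using key 0 0
  have hbb : ⟪B s, B s⟫ = 1 := by simpa using key 2 2
  have htb : ⟪T s, B s⟫ = 0 := by simpa using key 0 2
  have hbt : ⟪B s, T s⟫ = 0 := by simpa using key 2 0
  have hnt : ⟪N s, T s⟫ = 0 := by simpa using key 1 0
  have hnb : ⟪N s, B s⟫ = 0 := by simpa using key 1 2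
  have het : ⟪E s, T s⟫ = 0 := by simpa using key 3 0
  have heb : ⟪E s, B s⟫ = 0 := by simpa using key 3 2
  -- the candidate projection vector
  set u : E4 := K⁻¹ • ((1 - lam * κ) • T s + (lam * τ) • B s) with hu
  set v : E4 := L⁻¹ • ((κ - lam * (κ ^ 2 + τ ^ 2)) • N s + (lam * τ * σ) • E s) with hv
  set S : Submodule ℝ E4 := Submodule.span ℝ ({u, v} : Set E4) with hS
  set bvec : E4 := ((τ * (lam * (κ ^ 2 + τ ^ 2 + σ ^ 2) - κ * (1 + lam ^ 2 * σ ^ 2))) / K ^ 2) • ((lam * τ) • T s + (-(1 - lam * κ)) • B s) with hbvec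
  set w : E4 := deriv (deriv (deriv ξ)) s with hw
  have hbu : ⟪u, bvec⟫ = 0 := by
    rw [hu, hbvec]
    simp only [inner_add_left, inner_add_right, real_inner_smul_left, real_inner_smul_right,
      htt, hbb, htb, hbt]
    ring
  have hbv : ⟪v, bvec⟫ = 0 := by
    rw [hv, hbvec]
    simp only [inner_add_left, inner_add_right, real_inner_smul_left, real_inner_smul_right,
      hnt, hnb, het, heb]
    ring
  have hbmem : bvec ∈ Sᗮ := by
    rw [hS, Submodule.mem_orthogonal]
    intro y hy
    induction hy using Submodule.span_induction with
    | mem z hz => rcases hz with rfl | rfl; exacts [hbu, hbv]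
    | zero => simp
    | add a b _ _ ha hb => simp [inner_add_left, ha, hb]
    | smul c a _ ha => simp [inner_smul_left, ha]
  have hwb : w - bvec
      = (((-((κ - lam * (κ ^ 2 + τ ^ 2)) * κ)) * (1 - lam * κ) + ((κ - lam * (κ ^ 2 + τ ^ 2)) * τ - lam * τ * σ ^ 2) * (lam * τ)) / K) • u := by
    rw [h3, hbvec, hu]
    match_scalars
    · field_simp
      linear_combination (-(κ * (κ - lam * (κ ^ 2 + τ ^ 2)))) * hK2
    · field_simp
      linear_combination (κ - lam * (κ ^ 2 + τ ^ 2) - lam * σ ^ 2) * hK2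
  have haS : w - bvec ∈ S := by
    rw [hwb]
    exact S.smul_mem _ (Submodule.subset_span (Set.mem_insert _ _))
  have hproj : (Submodule.orthogonalProjectionOnto Sᗮ w : E4) = bvec := by
    have hsplit : Submodule.orthogonalProjectionOnto Sᗮ w
        = Submodule.orthogonalProjectionOnto Sᗮ (w - bvec) + Submodule.orthogonalProjectionOnto Sᗮ bvec := by
      rw [← map_add]; congr 1; abel
    rw [hsplit, Submodule.orthogonalProjectionOnto_orthogonal_apply_eq_zero haS,
      zero_add]
    rw [← Submodule.starProjection_apply]; exact Submodule.starProjection_eq_self_iff.mpr hbmem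
  have hxnorm : ‖(lam * τ) • T s + (-(1 - lam * κ)) • B s‖ = K := by
    have hsq : ‖(lam * τ) • T s + (-(1 - lam * κ)) • B s‖ ^ 2 = K ^ 2 := by
      rw [← real_inner_self_eq_norm_sq]
      simp only [inner_add_left, inner_add_right, real_inner_smul_left, real_inner_smul_right,
        htt, hbb, htb, hbt]
      rw [hK2]; ring
    calc ‖(lam * τ) • T s + (-(1 - lam * κ)) • B s‖
        = Real.sqrt (‖(lam * τ) • T s + (-(1 - lam * κ)) • B s‖ ^ 2) :=
          (Real.sqrt_sq (norm_nonneg _)).symm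
      _ = Real.sqrt (K ^ 2) := by rw [hsq]
      _ = K := Real.sqrt_sq hKpos.le
  have hnormproj : ‖(Submodule.orthogonalProjectionOnto Sᗮ w : E4)‖ = |(τ * (lam * (κ ^ 2 + τ ^ 2 + σ ^ 2) - κ * (1 + lam ^ 2 * σ ^ 2)))| / K := by
    rw [hproj, hbvec, norm_smul, hxnorm, Real.norm_eq_abs, abs_div, abs_of_pos (by positivity :
      (0:ℝ) < K ^ 2)]
    rw [div_mul_eq_mul_div]
    rw [show K ^ 2 = K * K from sq K]
    field_simp
  refine ⟨hnormproj, ?_⟩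
  have hξnorm : ‖deriv ξ s‖ = K := by
    have hd1 := h1 s hs
    have hsq : ‖deriv ξ s‖ ^ 2 = K ^ 2 := by
      rw [hd1, ← real_inner_self_eq_norm_sq]
      simp only [inner_add_left, inner_add_right, real_inner_smul_left, real_inner_smul_right,
        htt, hbb, htb, hbt]
      rw [hK2]; ring
    calc ‖deriv ξ s‖ = Real.sqrt (‖deriv ξ s‖ ^ 2) := (Real.sqrt_sq (norm_nonneg _)).symm
      _ = Real.sqrt (K ^ 2) := by rw [hsq]
      _ = K := Real.sqrt_sq hKpos.le
  rw [hnormproj, hξnorm, div_mul_cancel₀ _ hKpos.ne']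
end

section
/- Define E_ξ(s) = −(1/L)·(λτσ·N(s) − P·E(s)) (the unit trinormal of the Bertrand mate ξ). Then for every s ∈ I, |⟪ξ''''(s), E_ξ(s)⟫| = κσ·|M|/L; consequently, assuming M ≠ 0, the third curvature of ξ, defined by |σ_ξ(s)| = |⟪ξ''''(s), E_ξ(s)⟫|/((|M|/K)·‖ξ'(s)‖), equals κσ/L. -/
open scoped RealInnerProductSpace

local notation "E4" => EuclideanSpace ℝ (Fin 4)

/-- For the Bertrand mate `ξ = δ + λN` of a W-curve `δ` in `E⁴`,
with unit trinormal `E_ξ = −(1/L)(λτσ·N − P·E)`, one has `|⟪ξ'''', E_ξ⟫| = κσ|M|/L`;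
consequently (for `M ≠ 0`) the third curvature
`|σ_ξ| = |⟪ξ'''', E_ξ⟫|/((|M|/K)·‖ξ'‖)` equals `κσ/L`. -/
theorem bertrand_mate_third_curvature
    (I : Set ℝ) (hI : IsOpen I)
    (δ T N B E : ℝ → E4) (κ τ σ : ℝ)
    (hδ : ContDiff ℝ (⊤ : ℕ∞) δ) (hT : ContDiff ℝ (⊤ : ℕ∞) T) (hN : ContDiff ℝ (⊤ : ℕ∞) N)
    (hB : ContDiff ℝ (⊤ : ℕ∞) B) (hE : ContDiff ℝ (⊤ : ℕ∞) E)
    (horth : ∀ s ∈ I, Orthonormal ℝ ![T s, N s, B s, E s])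
    (hTδ : ∀ s ∈ I, T s = deriv δ s)
    (hfr : ∀ s ∈ I,
      deriv T s = κ • N s ∧
      deriv N s = (-κ) • T s + τ • B s ∧
      deriv B s = (-τ) • N s + σ • E s ∧
      deriv E s = (-σ) • B s)
    (hκ0 : 0 < κ) (hτ0 : 0 < τ) (hσ0 : 0 < σ)
    (lam : ℝ) (hlam : lam ≠ 0)
    (ξ : ℝ → E4) (hξ : ξ = fun s => δ s + lam • N s)
    (K P L M : ℝ)
    (hK : K = Real.sqrt ((1 - lam * κ) ^ 2 + (lam * τ) ^ 2))
    (hP : P = κ - lam * (κ ^ 2 + τ ^ 2))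
    (hL : L = Real.sqrt (P ^ 2 + (lam * τ * σ) ^ 2))
    (hM : M = τ * (lam * (κ ^ 2 + τ ^ 2 + σ ^ 2) - κ * (1 + lam ^ 2 * σ ^ 2)))
    (Eξ : ℝ → E4)
    (hEξ : Eξ = fun s => -(1 / L) • ((lam * τ * σ) • N s - P • E s)) :
    ∀ s ∈ I,
      |⟪deriv (deriv (deriv (deriv ξ))) s, Eξ s⟫| = κ * σ * |M| / L ∧
      (M ≠ 0 →
        |⟪deriv (deriv (deriv (deriv ξ))) s, Eξ s⟫| / ((|M| / K) * ‖deriv ξ s‖)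
          = κ * σ / L) := by
  have hlts : lam * τ * σ ≠ 0 := mul_ne_zero (mul_ne_zero hlam (ne_of_gt hτ0)) (ne_of_gt hσ0)
  have hlt : lam * τ ≠ 0 := mul_ne_zero hlam (ne_of_gt hτ0)
  have hL0 : 0 < L := by
    rw [hL]
    apply Real.sqrt_pos.mpr
    have : 0 < (lam * τ * σ) ^ 2 := by positivity
    nlinarith [sq_nonneg P]
  have hK0 : 0 < K := by
    rw [hK]
    apply Real.sqrt_pos.mpr
    have : 0 < (lam * τ) ^ 2 := by positivity
    nlinarith [sq_nonneg (1 - lam * κ)]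
  -- local derivative transfer
  have hloc : ∀ (f g : ℝ → E4), (∀ t ∈ I, f t = g t) → ∀ t ∈ I, deriv f t = deriv g t := by
    intro f g h t ht
    exact Filter.EventuallyEq.deriv_eq (Filter.eventuallyEq_of_mem (hI.mem_nhds ht) h)
  have hcomb : ∀ (a b : ℝ) (f g : ℝ → E4), ContDiff ℝ (⊤ : ℕ∞) f → ContDiff ℝ (⊤ : ℕ∞) g → ∀ t : ℝ,
      deriv (fun u => a • f u + b • g u) t = a • deriv f t + b • deriv g t := by
    intro a b f g hf hg t
    rw [deriv_fun_add (((hf.differentiable (by simp)) t).fun_const_smul a)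
        (((hg.differentiable (by simp)) t).fun_const_smul b),
      deriv_fun_const_smul a ((hf.differentiable (by simp)) t),
      deriv_fun_const_smul b ((hg.differentiable (by simp)) t)]
  have h1 : ∀ t ∈ I, deriv ξ t = (1 - lam * κ) • T t + (lam * τ) • B t := by
    intro t ht
    have : deriv ξ t = deriv δ t + lam • deriv N t := by
      rw [hξ, deriv_fun_add ((hδ.differentiable (by simp)) t)
        (((hN.differentiable (by simp)) t).fun_const_smul lam),
        deriv_fun_const_smul lam ((hN.differentiable (by simp)) t)]
    rw [this, ← hTδ t ht, (hfr t ht).2.1]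
    module
  have h2 : ∀ t ∈ I, deriv (deriv ξ) t = P • N t + (lam * τ * σ) • E t := by
    intro t ht
    rw [hloc _ _ h1 t ht, hcomb _ _ _ _ hT hB t, (hfr t ht).1, (hfr t ht).2.2.1, hP]
    module
  have h3 : ∀ t ∈ I, deriv (deriv (deriv ξ)) t
      = (-(P * κ)) • T t + (P * τ - lam * τ * σ ^ 2) • B t := by
    intro t ht
    rw [hloc _ _ h2 t ht, hcomb _ _ _ _ hN hE t, (hfr t ht).2.1, (hfr t ht).2.2.2]
    module
  have h4 : ∀ t ∈ I, deriv (deriv (deriv (deriv ξ))) t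
      = (-(P * κ ^ 2) - τ * (P * τ - lam * τ * σ ^ 2)) • N t
        + (σ * (P * τ - lam * τ * σ ^ 2)) • E t := by
    intro t ht
    rw [hloc _ _ h3 t ht, hcomb _ _ _ _ hT hB t, (hfr t ht).1, (hfr t ht).2.2.1]
    module
  intro s hs
  have ho := orthonormal_iff_ite.mp (horth s hs)
  have hTT : ⟪T s, T s⟫ = 1 := by simpa using ho 0 0
  have hTB : ⟪T s, B s⟫ = 0 := by simpa using ho 0 2
  have hBT : ⟪B s, T s⟫ = 0 := by simpa using ho 2 0
  have hBB : ⟪B s, B s⟫ = 1 := by simpa using ho 2 2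
  have hNN : ⟪N s, N s⟫ = 1 := by simpa using ho 1 1
  have hNE : ⟪N s, E s⟫ = 0 := by simpa using ho 1 3
  have hEN : ⟪E s, N s⟫ = 0 := by simpa using ho 3 1
  have hEE : ⟪E s, E s⟫ = 1 := by simpa using ho 3 3
  have hip : ⟪deriv (deriv (deriv (deriv ξ))) s, Eξ s⟫ = -(κ * σ * M) / L := by
    rw [h4 s hs, hEξ]
    simp only [inner_add_left, inner_sub_right, real_inner_smul_left, real_inner_smul_right,
      hNN, hNE, hEN, hEE]
    rw [hM, hP]
    ring
  have habs : |⟪deriv (deriv (deriv (deriv ξ))) s, Eξ s⟫| = κ * σ * |M| / L := by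
    rw [hip, abs_div, abs_neg, abs_mul, abs_mul, abs_of_pos hκ0, abs_of_pos hσ0,
      abs_of_pos hL0]
  refine ⟨habs, fun hM0 => ?_⟩
  have hnorm : ‖deriv ξ s‖ = K := by
    have hin : ⟪(1 - lam * κ) • T s + (lam * τ) • B s,
        (1 - lam * κ) • T s + (lam * τ) • B s⟫ = (1 - lam * κ) ^ 2 + (lam * τ) ^ 2 := by
      simp only [inner_add_left, inner_add_right, real_inner_smul_left, real_inner_smul_right,
        hTT, hTB, hBT, hBB]
      ring
    rw [h1 s hs, hK, ← hin, real_inner_self_eq_norm_sq, Real.sqrt_sq (norm_nonneg _)]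
  rw [habs, hnorm]
  have hMabs : (0:ℝ) < |M| := abs_pos.mpr hM0
  field_simp
end

section
/- Assume moreover that M ≠ 0 and λκ ≠ 1, and that I is nondegenerate. Then the Bertrand mate ξ of the W-curve δ is not a generalized helix: there is no nonzero vector U ∈ E⁴ such that s ↦ ⟪ξ'(s)/‖ξ'(s)‖, U⟫ is constant on I. -/
open scoped RealInnerProductSpace

local notation "E4" => EuclideanSpace ℝ (Fin 4)

private lemma deriv_inner_zero' {I : Set ℝ} (hI : IsOpen I) {f f' : ℝ → E4}
    (hf : ∀ s, HasDerivAt f (f' s) s) {U : E4} {c : ℝ}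
    (hconst : ∀ s ∈ I, ⟪f s, U⟫ = c) {s : ℝ} (hs : s ∈ I) : ⟪f' s, U⟫ = 0 := by
  have h1 : HasDerivAt (fun t => ⟪f t, U⟫) ⟪f' s, U⟫ s := by
    have := (hf s).inner ℝ (hasDerivAt_const s U)
    simpa using this
  have h2 : (fun t => ⟪f t, U⟫) =ᶠ[nhds s] fun _ => c :=
    Filter.eventually_of_mem (hI.mem_nhds hs) hconst
  have h3 : deriv (fun t => ⟪f t, U⟫) s = 0 := by rw [h2.deriv_eq]; simp
  rwa [h1.deriv] at h3

private lemma frame_inners {T N B E : E4} (h : Orthonormal ℝ ![T, N, B, E]) :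
    ⟪T, T⟫ = 1 ∧ ⟪B, B⟫ = 1 ∧ ⟪T, B⟫ = 0 ∧ ⟪B, T⟫ = 0 := by
  have h' := orthonormal_iff_ite.mp h
  refine ⟨?_, ?_, ?_, ?_⟩
  · simpa using h' 0 0
  · simpa using h' 2 2
  · simpa using h' 0 2
  · simpa using h' 2 0

/-- If moreover `M ≠ 0` and `λκ ≠ 1`, the Bertrand mate
`ξ = δ + λN` of the W-curve `δ` is not a generalized helix: there is no nonzero
`U` such that `s ↦ ⟪ξ'(s)/‖ξ'(s)‖, U⟫` is constant on `I`. -/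
theorem bertrand_mate_not_generalized_helix
    (I : Set ℝ) (hI : IsOpen I)
    (δ T N B E : ℝ → E4) (κ τ σ : ℝ)
    (hδ : ContDiff ℝ (⊤ : ℕ∞) δ) (hT : ContDiff ℝ (⊤ : ℕ∞) T) (hN : ContDiff ℝ (⊤ : ℕ∞) N)
    (hB : ContDiff ℝ (⊤ : ℕ∞) B) (hE : ContDiff ℝ (⊤ : ℕ∞) E)
    (horth : ∀ s ∈ I, Orthonormal ℝ ![T s, N s, B s, E s])
    (hTδ : ∀ s ∈ I, T s = deriv δ s)
    (hfr : ∀ s ∈ I,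
      deriv T s = κ • N s ∧
      deriv N s = (-κ) • T s + τ • B s ∧
      deriv B s = (-τ) • N s + σ • E s ∧
      deriv E s = (-σ) • B s)
    (hκ0 : 0 < κ) (hτ0 : 0 < τ) (hσ0 : 0 < σ)
    (lam : ℝ) (hlam : lam ≠ 0)
    (ξ : ℝ → E4) (hξ : ξ = fun s => δ s + lam • N s)
    (K P L M : ℝ)
    (hK : K = Real.sqrt ((1 - lam * κ) ^ 2 + (lam * τ) ^ 2))
    (hP : P = κ - lam * (κ ^ 2 + τ ^ 2))
    (hL : L = Real.sqrt (P ^ 2 + (lam * τ * σ) ^ 2))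
    (hM : M = τ * (lam * (κ ^ 2 + τ ^ 2 + σ ^ 2) - κ * (1 + lam ^ 2 * σ ^ 2)))
    (hM0 : M ≠ 0) (hlamκ : lam * κ ≠ 1) (hne : I.Nontrivial) :
    ¬ ∃ U : E4, U ≠ 0 ∧ ∃ c : ℝ, ∀ s ∈ I, ⟪‖deriv ξ s‖⁻¹ • deriv ξ s, U⟫ = c := by
  subst hξ
  rintro ⟨U, hU0, c, hc⟩
  have dT : ∀ s, HasDerivAt T (deriv T s) s := fun s => (hT.differentiable (by simp) s).hasDerivAt
  have dN : ∀ s, HasDerivAt N (deriv N s) s := fun s => (hN.differentiable (by simp) s).hasDerivAt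
  have dB : ∀ s, HasDerivAt B (deriv B s) s := fun s => (hB.differentiable (by simp) s).hasDerivAt
  have dE : ∀ s, HasDerivAt E (deriv E s) s := fun s => (hE.differentiable (by simp) s).hasDerivAt
  have dδ : ∀ s, HasDerivAt δ (deriv δ s) s := fun s => (hδ.differentiable (by simp) s).hasDerivAt
  have dξ : ∀ s, HasDerivAt (fun s => δ s + lam • N s) (deriv δ s + lam • deriv N s) s :=
    fun s => (dδ s).add ((dN s).const_smul lam)
  have hξd : ∀ s ∈ I, deriv (fun s => δ s + lam • N s) s
      = (1 - lam * κ) • T s + (lam * τ) • B s := by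
    intro s hs
    rw [(dξ s).deriv, ← hTδ s hs, (hfr s hs).2.1]
    module
  -- 1 - lam*κ ≠ 0 and K > 0
  have h1lk : 1 - lam * κ ≠ 0 := sub_ne_zero_of_ne (Ne.symm hlamκ)
  have hKpos : 0 < K := by
    rw [hK]
    apply Real.sqrt_pos.mpr
    have h1 : (0:ℝ) < (1 - lam * κ) ^ 2 := by positivity
    nlinarith [sq_nonneg (lam * τ)]
  -- norm of deriv ξ on I
  have hnorm : ∀ s ∈ I, ‖deriv (fun s => δ s + lam • N s) s‖ = K := by
    intro s hs
    obtain ⟨hTT, hBB, hTB, hBT⟩ := frame_inners (horth s hs)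
    rw [hξd s hs]
    have hsq : ‖(1 - lam * κ) • T s + (lam * τ) • B s‖ ^ 2
        = (1 - lam * κ) ^ 2 + (lam * τ) ^ 2 := by
      rw [← real_inner_self_eq_norm_sq]
      simp only [inner_add_left, inner_add_right, real_inner_smul_left, real_inner_smul_right,
        hTT, hBB, hTB, hBT]
      ring
    rw [hK, ← hsq, Real.sqrt_sq (norm_nonneg _)]
  -- ⟪deriv ξ, U⟫ constant on I
  have h5 : ∀ s ∈ I, ⟪(1 - lam * κ) • T s + (lam * τ) • B s, U⟫ = K * c := by
    intro s hs
    have h := hc s hs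
    rw [hnorm s hs, hξd s hs, real_inner_smul_left, inv_mul_eq_iff_eq_mul₀ hKpos.ne'] at h
    exact h
  -- first derivative: P b + λτσ e = 0
  have h6 : ∀ s ∈ I, ⟪P • N s + (lam * τ * σ) • E s, U⟫ = 0 := by
    intro s hs
    have hd : ∀ t, HasDerivAt (fun t => (1 - lam * κ) • T t + (lam * τ) • B t)
        ((1 - lam * κ) • deriv T t + (lam * τ) • deriv B t) t :=
      fun t => ((dT t).const_smul (1 - lam * κ)).add ((dB t).const_smul (lam * τ))
    have h := deriv_inner_zero' hI hd h5 hs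
    rw [(hfr s hs).1, (hfr s hs).2.2.1] at h
    simp only [inner_add_left, real_inner_smul_left, smul_smul] at h ⊢
    linear_combination h + ⟪N s, U⟫ * hP
  -- second derivative: -Pκ a + (Pτ - λτσ²) b3 = 0
  have h7 : ∀ s ∈ I, ⟪(-(P * κ)) • T s + (P * τ - lam * τ * σ ^ 2) • B s, U⟫ = 0 := by
    intro s hs
    have hd : ∀ t, HasDerivAt (fun t => P • N t + (lam * τ * σ) • E t)
        (P • deriv N t + (lam * τ * σ) • deriv E t) t :=
      fun t => ((dN t).const_smul P).add ((dE t).const_smul (lam * τ * σ))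
    have h := deriv_inner_zero' hI hd h6 hs
    rw [(hfr s hs).2.1, (hfr s hs).2.2.2] at h
    simp only [inner_add_left, real_inner_smul_left, smul_smul] at h ⊢
    linear_combination h
  -- third derivative
  have h8 : ∀ s ∈ I, (-(P * κ ^ 2) - (P * τ - lam * τ * σ ^ 2) * τ) * ⟪N s, U⟫
      + ((P * τ - lam * τ * σ ^ 2) * σ) * ⟪E s, U⟫ = 0 := by
    intro s hs
    have hd : ∀ t, HasDerivAt (fun t => (-(P * κ)) • T t + (P * τ - lam * τ * σ ^ 2) • B t)
        ((-(P * κ)) • deriv T t + (P * τ - lam * τ * σ ^ 2) • deriv B t) t :=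
      fun t => ((dT t).const_smul (-(P * κ))).add ((dB t).const_smul (P * τ - lam * τ * σ ^ 2))
    have h := deriv_inner_zero' hI hd h7 hs
    rw [(hfr s hs).1, (hfr s hs).2.2.1] at h
    simp only [inner_add_left, real_inner_smul_left, smul_smul] at h
    linear_combination h
  -- determinant
  have hdet : P * ((P * τ - lam * τ * σ ^ 2) * σ)
      - (lam * τ * σ) * (-(P * κ ^ 2) - (P * τ - lam * τ * σ ^ 2) * τ) = -(σ * κ * M) := by
    rw [hP, hM]; ring
  have hσκM : σ * κ * M ≠ 0 := mul_ne_zero (mul_ne_zero hσ0.ne' hκ0.ne') hM0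
  have hbN : ∀ s ∈ I, ⟪N s, U⟫ = 0 := by
    intro s hs
    have h6' := h6 s hs
    simp only [inner_add_left, real_inner_smul_left] at h6'
    have h8' := h8 s hs
    have h0 : (σ * κ * M) * ⟪N s, U⟫ = 0 := by
      linear_combination (-((P * τ - lam * τ * σ ^ 2) * σ)) * h6' + (lam * τ * σ) * h8'
        + ⟪N s, U⟫ * hdet
    exact (mul_eq_zero.mp h0).resolve_left hσκM
  have hbE : ∀ s ∈ I, ⟪E s, U⟫ = 0 := by
    intro s hs
    have h6' := h6 s hs
    simp only [inner_add_left, real_inner_smul_left] at h6'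
    have h8' := h8 s hs
    have h0 : (σ * κ * M) * ⟪E s, U⟫ = 0 := by
      linear_combination (-(P * κ ^ 2) - (P * τ - lam * τ * σ ^ 2) * τ) * h6' - P * h8'
        + ⟪E s, U⟫ * hdet
    exact (mul_eq_zero.mp h0).resolve_left hσκM
  -- from b ≡ 0 and e ≡ 0 on I : derivatives vanish
  have hbB : ∀ s ∈ I, ⟪B s, U⟫ = 0 := by
    intro s hs
    have h := deriv_inner_zero' hI dE hbE hs
    rw [(hfr s hs).2.2.2, real_inner_smul_left] at h
    have := hσ0.ne'
    rcases mul_eq_zero.mp h with h' | h'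
    · exact absurd (neg_eq_zero.mp h') this
    · exact h'
  have hbT : ∀ s ∈ I, ⟪T s, U⟫ = 0 := by
    intro s hs
    have h := deriv_inner_zero' hI dN hbN hs
    rw [(hfr s hs).2.1, inner_add_left, real_inner_smul_left, real_inner_smul_left,
      hbB s hs] at h
    have h' : (-κ) * ⟪T s, U⟫ = 0 := by linarith
    rcases mul_eq_zero.mp h' with h'' | h''
    · exact absurd (neg_eq_zero.mp h'') hκ0.ne'
    · exact h''
  -- conclude U = 0
  obtain ⟨s₀, hs₀, -, -, -⟩ := hne
  have ho := horth s₀ hs₀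
  apply hU0
  refine InnerProductSpace.ext_inner_left_basis (basisOfLinearIndependentOfCardEqFinrank
    ho.linearIndependent (by simp [finrank_euclideanSpace])) fun i => ?_
  rw [coe_basisOfLinearIndependentOfCardEqFinrank]
  fin_cases i <;>
    simp [hbT s₀ hs₀, hbN s₀ hs₀, hbB s₀ hs₀, hbE s₀ hs₀]
end

section
/- Assume moreover that M ≠ 0 and that I is nondegenerate, and let E_ξ(s) = −(1/L)·(λτσ·N(s) − P·E(s)) be the unit trinormal of the Bertrand mate ξ. Then ξ is not a 3-type slant helix: there is no nonzero vector U ∈ E⁴ such that s ↦ ⟪E_ξ(s), U⟫ is constant on I. -/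
open scoped RealInnerProductSpace

local notation "E4" => EuclideanSpace ℝ (Fin 4)

private lemma deriv_zero_of_const_on {f : ℝ → ℝ} {I : Set ℝ} (hI : IsOpen I)
    {c : ℝ} (hf : ∀ t ∈ I, f t = c) {s : ℝ} (hs : s ∈ I) : deriv f s = 0 := by
  have h : f =ᶠ[nhds s] fun _ => c := by
    filter_upwards [hI.mem_nhds hs] with t ht using hf t ht
  rw [h.deriv_eq]
  exact deriv_const s c

/-- If moreover `M ≠ 0`, the Bertrand mate `ξ = δ + λN` of the
W-curve `δ`, with unit trinormal `E_ξ = −(1/L)(λτσ·N − P·E)`, is not a 3-type slant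
helix: there is no nonzero `U` such that `s ↦ ⟪E_ξ(s), U⟫` is constant on `I`. -/
theorem bertrand_mate_not_slant_helix
    (I : Set ℝ) (hI : IsOpen I)
    (δ T N B E : ℝ → E4) (κ τ σ : ℝ)
    (hδ : ContDiff ℝ (⊤ : ℕ∞) δ) (hT : ContDiff ℝ (⊤ : ℕ∞) T) (hN : ContDiff ℝ (⊤ : ℕ∞) N)
    (hB : ContDiff ℝ (⊤ : ℕ∞) B) (hE : ContDiff ℝ (⊤ : ℕ∞) E)
    (horth : ∀ s ∈ I, Orthonormal ℝ ![T s, N s, B s, E s])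
    (hTδ : ∀ s ∈ I, T s = deriv δ s)
    (hfr : ∀ s ∈ I,
      deriv T s = κ • N s ∧
      deriv N s = (-κ) • T s + τ • B s ∧
      deriv B s = (-τ) • N s + σ • E s ∧
      deriv E s = (-σ) • B s)
    (hκ0 : 0 < κ) (hτ0 : 0 < τ) (hσ0 : 0 < σ)
    (lam : ℝ) (hlam : lam ≠ 0)
    (ξ : ℝ → E4) (hξ : ξ = fun s => δ s + lam • N s)
    (K P L M : ℝ)
    (hK : K = Real.sqrt ((1 - lam * κ) ^ 2 + (lam * τ) ^ 2))
    (hP : P = κ - lam * (κ ^ 2 + τ ^ 2))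
    (hL : L = Real.sqrt (P ^ 2 + (lam * τ * σ) ^ 2))
    (hM : M = τ * (lam * (κ ^ 2 + τ ^ 2 + σ ^ 2) - κ * (1 + lam ^ 2 * σ ^ 2)))
    (hM0 : M ≠ 0) (hne : I.Nontrivial)
    (Eξ : ℝ → E4)
    (hEξ : Eξ = fun s => -(1 / L) • ((lam * τ * σ) • N s - P • E s)) :
    ¬ ∃ U : E4, U ≠ 0 ∧ ∃ c : ℝ, ∀ s ∈ I, ⟪Eξ s, U⟫ = c := by
  rintro ⟨U, hU0, c, hc⟩
  subst hEξ
  -- positivity of L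
  have hlts : lam * τ * σ ≠ 0 := by positivity
  have hL0 : 0 < L := by
    rw [hL]; apply Real.sqrt_pos.mpr; positivity
  -- component functions
  set a : ℝ → ℝ := fun s => ⟪T s, U⟫ with ha_def
  set n : ℝ → ℝ := fun s => ⟪N s, U⟫ with hn_def
  set b : ℝ → ℝ := fun s => ⟪B s, U⟫ with hb_def
  set e : ℝ → ℝ := fun s => ⟪E s, U⟫ with he_def
  -- generic derivative lemma
  have key : ∀ (f : ℝ → E4), ContDiff ℝ (⊤ : ℕ∞) f → ∀ s : ℝ,
      HasDerivAt (fun t => ⟪f t, U⟫) ⟪deriv f s, U⟫ s := by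
    intro f hf s
    have hd := (hf.differentiable (by simp) s).hasDerivAt
    have h := hd.inner (𝕜 := ℝ) (hasDerivAt_const s U)
    simpa only [inner_zero_right, zero_add] using h
  -- derivatives of components on I
  have hda : ∀ s ∈ I, HasDerivAt a (κ * n s) s := by
    intro s hs
    have h := key T hT s
    rw [(hfr s hs).1] at h
    convert h using 1
    simp only [real_inner_smul_left]
    rfl
  have hdn : ∀ s ∈ I, HasDerivAt n (-κ * a s + τ * b s) s := by
    intro s hs
    have h := key N hN s
    rw [(hfr s hs).2.1] at h
    convert h using 1
    simp only [inner_add_left, real_inner_smul_left]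
    rfl
  have hdb : ∀ s ∈ I, HasDerivAt b (-τ * n s + σ * e s) s := by
    intro s hs
    have h := key B hB s
    rw [(hfr s hs).2.2.1] at h
    convert h using 1
    simp only [inner_add_left, real_inner_smul_left]
    rfl
  have hde : ∀ s ∈ I, HasDerivAt e (-σ * b s) s := by
    intro s hs
    have h := key E hE s
    rw [(hfr s hs).2.2.2] at h
    convert h using 1
    simp only [real_inner_smul_left]
    rfl
  -- the constancy hypothesis in scalar form
  have hgc : ∀ s ∈ I, lam * τ * σ * n s - P * e s = -L * c := by
    intro s hs
    have h := hc s hs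
    simp only [inner_smul_left, inner_sub_left, real_inner_smul_left, inner_neg_left,
      RCLike.star_def, conj_trivial] at h
    have : -(1 / L) * (lam * τ * σ * n s - P * e s) = c := by
      simpa [ha_def, hn_def, hb_def, he_def, mul_sub] using h
    field_simp at this
    linarith [this]
  -- first derived equation : h1 = 0 on I
  have h1eq : ∀ s ∈ I, -(lam * τ) * a s + (1 - lam * κ) * b s = 0 := by
    intro s hs
    have hdg : HasDerivAt (fun t => lam * τ * σ * n t - P * e t)
        (σ * κ * (-(lam * τ) * a s + (1 - lam * κ) * b s)) s := by
      have h := ((hdn s hs).const_mul (lam * τ * σ)).sub ((hde s hs).const_mul P)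
      have heq : lam * τ * σ * (-κ * a s + τ * b s) - P * (-σ * b s)
          = σ * κ * (-(lam * τ) * a s + (1 - lam * κ) * b s) := by
        rw [hP]; ring
      rwa [heq] at h
    have h0 : deriv (fun t => lam * τ * σ * n t - P * e t) s = 0 :=
      deriv_zero_of_const_on hI hgc hs
    have := hdg.deriv
    rw [h0] at this
    have hσκ : σ * κ ≠ 0 := by positivity
    exact (mul_eq_zero.mp this.symm).resolve_left hσκ
  -- second derived equation : h2 = 0 on I
  have h2eq : ∀ s ∈ I, -τ * n s + σ * (1 - lam * κ) * e s = 0 := by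
    intro s hs
    have hdg : HasDerivAt (fun t => -(lam * τ) * a t + (1 - lam * κ) * b t)
        (-τ * n s + σ * (1 - lam * κ) * e s) s := by
      have h := ((hda s hs).const_mul (-(lam * τ))).add ((hdb s hs).const_mul (1 - lam * κ))
      have heq : -(lam * τ) * (κ * n s) + (1 - lam * κ) * (-τ * n s + σ * e s)
          = -τ * n s + σ * (1 - lam * κ) * e s := by ring
      rwa [heq] at h
    have h0 : deriv (fun t => -(lam * τ) * a t + (1 - lam * κ) * b t) s = 0 :=
      deriv_zero_of_const_on hI h1eq hs
    have := hdg.deriv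
    rw [h0] at this
    exact this.symm
  -- third derived equation : h3 = 0 on I
  have h3eq : ∀ s ∈ I, τ * κ * a s - (τ ^ 2 + σ ^ 2 * (1 - lam * κ)) * b s = 0 := by
    intro s hs
    have hdg : HasDerivAt (fun t => -τ * n t + σ * (1 - lam * κ) * e t)
        (τ * κ * a s - (τ ^ 2 + σ ^ 2 * (1 - lam * κ)) * b s) s := by
      have h := ((hdn s hs).const_mul (-τ)).add ((hde s hs).const_mul (σ * (1 - lam * κ)))
      have heq : -τ * (-κ * a s + τ * b s) + σ * (1 - lam * κ) * (-σ * b s)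
          = τ * κ * a s - (τ ^ 2 + σ ^ 2 * (1 - lam * κ)) * b s := by ring
      rwa [heq] at h
    have h0 : deriv (fun t => -τ * n t + σ * (1 - lam * κ) * e t) s = 0 :=
      deriv_zero_of_const_on hI h2eq hs
    have := hdg.deriv
    rw [h0] at this
    exact this.symm
  -- solve the linear system: a = b = 0 on I
  have ha0 : ∀ s ∈ I, a s = 0 := by
    intro s hs
    have e1 := h1eq s hs
    have e2 := h3eq s hs
    have hMa : M * a s = 0 := by
      rw [hM]
      linear_combination (-(τ ^ 2 + σ ^ 2 * (1 - lam * κ))) * e1 - (1 - lam * κ) * e2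
    exact (mul_eq_zero.mp hMa).resolve_left hM0
  have hb0 : ∀ s ∈ I, b s = 0 := by
    intro s hs
    have e1 := h1eq s hs
    have e2 := h3eq s hs
    have hMb : M * b s = 0 := by
      rw [hM]
      linear_combination (-(τ * κ)) * e1 - lam * τ * e2
    exact (mul_eq_zero.mp hMb).resolve_left hM0
  -- hence n = e = 0 on I
  have hn0 : ∀ s ∈ I, n s = 0 := by
    intro s hs
    have h0 : deriv a s = 0 := deriv_zero_of_const_on hI ha0 hs
    have := (hda s hs).deriv
    rw [h0] at this
    have := (mul_eq_zero.mp this.symm).resolve_left (ne_of_gt hκ0)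
    exact this
  have he0 : ∀ s ∈ I, e s = 0 := by
    intro s hs
    have h0 : deriv b s = 0 := deriv_zero_of_const_on hI hb0 hs
    have := (hdb s hs).deriv
    rw [h0, hn0 s hs] at this
    have h' : σ * e s = 0 := by linarith [this]
    exact (mul_eq_zero.mp h').resolve_left (ne_of_gt hσ0)
  -- conclude U = 0, contradiction
  obtain ⟨s₀, hs₀, -, -, -⟩ := hne
  have ho := horth s₀ hs₀
  have hcard : Fintype.card (Fin 4) = Module.finrank ℝ E4 := by
    simp [finrank_euclideanSpace]
  let bb := basisOfOrthonormalOfCardEqFinrank ho hcard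
  have hbb : ⇑bb = ![T s₀, N s₀, B s₀, E s₀] :=
    coe_basisOfOrthonormalOfCardEqFinrank ho hcard
  have hob : Orthonormal ℝ ⇑bb := by rwa [hbb]
  let ob := bb.toOrthonormalBasis hob
  apply hU0
  have hrepr : ob.repr U = 0 := by
    ext i
    rw [ob.repr_apply_apply]
    have hobi : ob i = bb i := bb.coe_toOrthonormalBasis hob ▸ rfl
    fin_cases i <;>
      simp only [hobi, hbb] <;>
      simp [Matrix.cons_val_zero, Matrix.cons_val_one] <;>
      [exact ha0 s₀ hs₀; exact hn0 s₀ hs₀; exact hb0 s₀ hs₀; exact he0 s₀ hs₀]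
  exact ob.repr.map_eq_zero_iff.mp hrepr
end

section
/- Assume moreover that M ≠ 0 and that I is nondegenerate. If there exist m ∈ E⁴ and r > 0 such that ‖ξ(s) − m‖ = r for all s ∈ I (the Bertrand mate ξ lies on a hypersphere), then r = √(τ² + (1 − λκ)²·σ²)/(κ·σ). -/
open scoped RealInnerProductSpace

local notation "E4" => EuclideanSpace ℝ (Fin 4)

private lemma deriv_zero_on_open {I : Set ℝ} (hI : IsOpen I) {φ : ℝ → ℝ} {k : ℝ}
    (hφ : ∀ t ∈ I, φ t = k) {s : ℝ} (hs : s ∈ I) {d : ℝ} (hd : HasDerivAt φ d s) : d = 0 := by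
  have heq : φ =ᶠ[nhds s] fun _ => k := Filter.eventuallyEq_of_mem (hI.mem_nhds hs) hφ
  exact hd.unique ((hasDerivAt_const s k).congr_of_eventuallyEq heq)

/-- If moreover `M ≠ 0` and the Bertrand mate `ξ = δ + λN` of the
W-curve `δ` lies on a hypersphere of radius `r > 0`, then
`r = √(τ² + (1 − λκ)²σ²)/(κσ)`. -/
theorem bertrand_mate_sphere_radius
    (I : Set ℝ) (hI : IsOpen I)
    (δ T N B E : ℝ → E4) (κ τ σ : ℝ)
    (hδ : ContDiff ℝ (⊤ : ℕ∞) δ) (hT : ContDiff ℝ (⊤ : ℕ∞) T) (hN : ContDiff ℝ (⊤ : ℕ∞) N)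
    (hB : ContDiff ℝ (⊤ : ℕ∞) B) (hE : ContDiff ℝ (⊤ : ℕ∞) E)
    (horth : ∀ s ∈ I, Orthonormal ℝ ![T s, N s, B s, E s])
    (hTδ : ∀ s ∈ I, T s = deriv δ s)
    (hfr : ∀ s ∈ I,
      deriv T s = κ • N s ∧
      deriv N s = (-κ) • T s + τ • B s ∧
      deriv B s = (-τ) • N s + σ • E s ∧
      deriv E s = (-σ) • B s)
    (hκ0 : 0 < κ) (hτ0 : 0 < τ) (hσ0 : 0 < σ)
    (lam : ℝ) (hlam : lam ≠ 0)
    (ξ : ℝ → E4) (hξ : ξ = fun s => δ s + lam • N s)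
    (K P L M : ℝ)
    (hK : K = Real.sqrt ((1 - lam * κ) ^ 2 + (lam * τ) ^ 2))
    (hP : P = κ - lam * (κ ^ 2 + τ ^ 2))
    (hL : L = Real.sqrt (P ^ 2 + (lam * τ * σ) ^ 2))
    (hM : M = τ * (lam * (κ ^ 2 + τ ^ 2 + σ ^ 2) - κ * (1 + lam ^ 2 * σ ^ 2)))
    (hM0 : M ≠ 0) (hne : I.Nontrivial)
    (m : E4) (r : ℝ) (hr : 0 < r)
    (hsphere : ∀ s ∈ I, ‖ξ s - m‖ = r) :
    r = Real.sqrt (τ ^ 2 + (1 - lam * κ) ^ 2 * σ ^ 2) / (κ * σ) := by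
  subst hξ hM hP
  clear hK hL
  set u : ℝ → E4 := fun t => (δ t + lam • N t) - m with hu
  -- differentiability
  have hTd : Differentiable ℝ T := hT.differentiable (by simp)
  have hNd : Differentiable ℝ N := hN.differentiable (by simp)
  have hBd : Differentiable ℝ B := hB.differentiable (by simp)
  have hEd : Differentiable ℝ E := hE.differentiable (by simp)
  have hδd : Differentiable ℝ δ := hδ.differentiable (by simp)
  -- frame derivatives on I
  have hT' : ∀ s ∈ I, HasDerivAt T (κ • N s) s := fun s hs => by
    have := (hTd s).hasDerivAt; rwa [(hfr s hs).1] at this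
  have hN' : ∀ s ∈ I, HasDerivAt N ((-κ) • T s + τ • B s) s := fun s hs => by
    have := (hNd s).hasDerivAt; rwa [(hfr s hs).2.1] at this
  have hB' : ∀ s ∈ I, HasDerivAt B ((-τ) • N s + σ • E s) s := fun s hs => by
    have := (hBd s).hasDerivAt; rwa [(hfr s hs).2.2.1] at this
  have hE' : ∀ s ∈ I, HasDerivAt E ((-σ) • B s) s := fun s hs => by
    have := (hEd s).hasDerivAt; rwa [(hfr s hs).2.2.2] at this
  have hu' : ∀ s ∈ I, HasDerivAt u ((1 - lam * κ) • T s + (lam * τ) • B s) s := by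
    intro s hs
    have h1 : HasDerivAt δ (T s) s := by
      have := (hδd s).hasDerivAt; rwa [← hTδ s hs] at this
    have h2 := (h1.add ((hN' s hs).const_smul lam)).sub_const m
    refine h2.congr_deriv ?_
    module
  -- inner product table at points of I
  have tab : ∀ s ∈ I, ⟪T s, T s⟫ = 1 ∧ ⟪T s, N s⟫ = 0 ∧ ⟪T s, B s⟫ = 0 ∧ ⟪T s, E s⟫ = 0 ∧
      ⟪N s, T s⟫ = 0 ∧ ⟪N s, N s⟫ = 1 ∧ ⟪N s, B s⟫ = 0 ∧ ⟪N s, E s⟫ = 0 ∧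
      ⟪B s, T s⟫ = 0 ∧ ⟪B s, N s⟫ = 0 ∧ ⟪B s, B s⟫ = 1 ∧ ⟪B s, E s⟫ = 0 ∧
      ⟪E s, T s⟫ = 0 ∧ ⟪E s, N s⟫ = 0 ∧ ⟪E s, B s⟫ = 0 ∧ ⟪E s, E s⟫ = 1 := by
    intro s hs
    have w := orthonormal_iff_ite.mp (horth s hs)
    refine ⟨?_, ?_, ?_, ?_, ?_, ?_, ?_, ?_, ?_, ?_, ?_, ?_, ?_, ?_, ?_, ?_⟩
    · simpa using w 0 0
    · simpa using w 0 1
    · simpa using w 0 2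
    · simpa using w 0 3
    · simpa using w 1 0
    · simpa using w 1 1
    · simpa using w 1 2
    · simpa using w 1 3
    · simpa using w 2 0
    · simpa using w 2 1
    · simpa using w 2 2
    · simpa using w 2 3
    · simpa using w 3 0
    · simpa using w 3 1
    · simpa using w 3 2
    · simpa using w 3 3
  -- scalar component derivatives
  have hA' : ∀ s ∈ I, HasDerivAt (fun t => ⟪T t, u t⟫)
      (κ * ⟪N s, u s⟫ + (1 - lam * κ)) s := by
    intro s hs
    have h := HasDerivAt.inner ℝ (hT' s hs) (hu' s hs)
    refine h.congr_deriv ?_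
    obtain ⟨h1, h2, h3, -⟩ := tab s hs
    rw [inner_add_right, real_inner_smul_right, real_inner_smul_right, real_inner_smul_left,
      h1, h3]
    ring
  have hB2' : ∀ s ∈ I, HasDerivAt (fun t => ⟪N t, u t⟫)
      ((-κ) * ⟪T s, u s⟫ + τ * ⟪B s, u s⟫) s := by
    intro s hs
    have h := HasDerivAt.inner ℝ (hN' s hs) (hu' s hs)
    refine h.congr_deriv ?_
    obtain ⟨-, -, -, -, h5, -, h7, -⟩ := tab s hs
    rw [inner_add_right, real_inner_smul_right, real_inner_smul_right, inner_add_left,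
      real_inner_smul_left, real_inner_smul_left, h5, h7]
    ring
  have hC' : ∀ s ∈ I, HasDerivAt (fun t => ⟪B t, u t⟫)
      ((-τ) * ⟪N s, u s⟫ + σ * ⟪E s, u s⟫ + lam * τ) s := by
    intro s hs
    have h := HasDerivAt.inner ℝ (hB' s hs) (hu' s hs)
    refine h.congr_deriv ?_
    obtain ⟨-, -, -, -, -, -, -, -, h9, -, h11, -⟩ := tab s hs
    rw [inner_add_right, real_inner_smul_right, real_inner_smul_right, inner_add_left,
      real_inner_smul_left, real_inner_smul_left, h9, h11]
    ring
  have hD' : ∀ s ∈ I, HasDerivAt (fun t => ⟪E t, u t⟫)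
      ((-σ) * ⟪B s, u s⟫) s := by
    intro s hs
    have h := HasDerivAt.inner ℝ (hE' s hs) (hu' s hs)
    refine h.congr_deriv ?_
    obtain ⟨-, -, -, -, -, -, -, -, -, -, -, -, h13, -, h15, -⟩ := tab s hs
    rw [inner_add_right, real_inner_smul_right, real_inner_smul_right, real_inner_smul_left,
      h13, h15]
    ring
  -- Step 1: first derivative of the sphere condition
  have Eq1 : ∀ s ∈ I, (1 - lam * κ) * ⟪T s, u s⟫ + (lam * τ) * ⟪B s, u s⟫ = 0 := by
    intro s hs
    have hF : ∀ t ∈ I, ⟪u t, u t⟫ = r ^ 2 := by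
      intro t ht
      rw [real_inner_self_eq_norm_sq, hsphere t ht]
    have hd := HasDerivAt.inner ℝ (hu' s hs) (hu' s hs)
    have h0 := deriv_zero_on_open hI hF hs hd
    rw [inner_add_left, inner_add_right, real_inner_smul_left, real_inner_smul_left,
      real_inner_smul_right, real_inner_smul_right, real_inner_comm (T s) (u s),
      real_inner_comm (B s) (u s)] at h0
    linarith
  -- Step 2: second derivative
  have Eq2 : ∀ s ∈ I, (1 - lam * κ) * (κ * ⟪N s, u s⟫ + (1 - lam * κ)) +
      (lam * τ) * ((-τ) * ⟪N s, u s⟫ + σ * ⟪E s, u s⟫ + lam * τ) = 0 := by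
    intro s hs
    have hd := ((hA' s hs).const_mul (1 - lam * κ)).add ((hC' s hs).const_mul (lam * τ))
    exact deriv_zero_on_open hI Eq1 hs hd
  -- Step 3: third derivative
  have Eq3 : ∀ s ∈ I, (1 - lam * κ) * (κ * ((-κ) * ⟪T s, u s⟫ + τ * ⟪B s, u s⟫)) +
      (lam * τ) * ((-τ) * ((-κ) * ⟪T s, u s⟫ + τ * ⟪B s, u s⟫) +
        σ * ((-σ) * ⟪B s, u s⟫)) = 0 := by
    intro s hs
    have hd := (((hB2' s hs).const_mul κ).add_const (1 - lam * κ)).const_mul (1 - lam * κ) |>.add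
      (((((hB2' s hs).const_mul (-τ)).add ((hD' s hs).const_mul σ)).add_const (lam * τ)).const_mul
        (lam * τ))
    have h0 := deriv_zero_on_open hI Eq2 hs hd
    linarith [h0]
  -- Step 4: A = C = 0 on I
  have hAC : ∀ s ∈ I, ⟪T s, u s⟫ = 0 ∧ ⟪B s, u s⟫ = 0 := by
    intro s hs
    have e1 := Eq1 s hs
    have e3 := Eq3 s hs
    have hMA : τ * (lam * (κ ^ 2 + τ ^ 2 + σ ^ 2) - κ * (1 + lam ^ 2 * σ ^ 2)) *
        ⟪T s, u s⟫ = 0 := by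
      linear_combination (lam * τ) * e3 -
        (((1 - lam * κ) * κ - lam * τ ^ 2) * τ - lam * τ * σ ^ 2) * e1
    have hA0 : ⟪T s, u s⟫ = 0 := by
      rcases mul_eq_zero.mp hMA with h | h
      · exact absurd h hM0
      · exact h
    refine ⟨hA0, ?_⟩
    have hlt : lam * τ ≠ 0 := mul_ne_zero hlam hτ0.ne'
    have h2 : lam * τ * ⟪B s, u s⟫ = 0 := by linear_combination e1 - (1 - lam * κ) * hA0
    exact (mul_eq_zero.mp h2).resolve_left hlt
  -- Step 5: values of the N and E components
  have hBD : ∀ s ∈ I, κ * ⟪N s, u s⟫ + (1 - lam * κ) = 0 ∧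
      (-τ) * ⟪N s, u s⟫ + σ * ⟪E s, u s⟫ + lam * τ = 0 := by
    intro s hs
    constructor
    · exact deriv_zero_on_open hI (fun t ht => (hAC t ht).1) hs (hA' s hs)
    · exact deriv_zero_on_open hI (fun t ht => (hAC t ht).2) hs (hC' s hs)
  -- Step 6: Parseval at a point
  obtain ⟨s₀, hs₀, -⟩ := hne
  have hon := horth s₀ hs₀
  have hcard : Fintype.card (Fin 4) = Module.finrank ℝ E4 := by
    simp [finrank_euclideanSpace_fin]
  have hsp : ⊤ ≤ Submodule.span ℝ (Set.range ![T s₀, N s₀, B s₀, E s₀]) :=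
    (hon.linearIndependent.span_eq_top_of_card_eq_finrank hcard).ge
  have hpar := (OrthonormalBasis.mk hon hsp).sum_inner_mul_inner (u s₀) (u s₀)
  have hob : ∀ i, (OrthonormalBasis.mk hon hsp) i = ![T s₀, N s₀, B s₀, E s₀] i :=
    fun i => congrFun (OrthonormalBasis.coe_mk hon hsp) i
  rw [Fin.sum_univ_four, hob 0, hob 1, hob 2, hob 3] at hpar
  simp only [Matrix.cons_val_zero, Matrix.cons_val_one, Matrix.head_cons,
    Matrix.cons_val_two, Matrix.tail_cons, Matrix.cons_val_three] at hpar
  rw [real_inner_comm (T s₀) (u s₀), real_inner_comm (N s₀) (u s₀),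
    real_inner_comm (B s₀) (u s₀), real_inner_comm (E s₀) (u s₀),
    real_inner_self_eq_norm_sq, hsphere s₀ hs₀] at hpar
  obtain ⟨hA0, hC0⟩ := hAC s₀ hs₀
  obtain ⟨e2, e3⟩ := hBD s₀ hs₀
  rw [hA0, hC0] at hpar
  -- hpar : ⟪N,u⟫ * ⟪N,u⟫ + ⟪E,u⟫ * ⟪E,u⟫ = r^2 (plus zero terms)
  have key : (r * (κ * σ)) ^ 2 = τ ^ 2 + (1 - lam * κ) ^ 2 * σ ^ 2 := by
    linear_combination (-(κ ^ 2 * σ ^ 2)) * hpar +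
      (σ ^ 2 * (κ * ⟪N s₀, u s₀⟫ - (1 - lam * κ))) * e2 +
      (κ * σ * ⟪E s₀, u s₀⟫ - τ) * (κ * e3 + τ * e2)
  have hpos : 0 < κ * σ := mul_pos hκ0 hσ0
  have h1 : Real.sqrt (τ ^ 2 + (1 - lam * κ) ^ 2 * σ ^ 2) = r * (κ * σ) := by
    rw [← key, Real.sqrt_sq (by positivity)]
  rw [h1]
  field_simp
end

section
/- For every s ∈ I, the involute ξ of the W-curve δ satisfies ξ'(s) = (c − s)·κ·N(s), so its speed is ‖ξ'(s)‖ = κ·(c − s) and its unit tangent is T_ξ(s) = N(s). Moreover its first curvature, defined by the regular-curve formula κ_ξ(s) = ‖‖ξ'(s)‖²ξ''(s) − ⟪ξ'(s), ξ''(s)⟫ξ'(s)‖/‖ξ'(s)‖⁴, equals √(κ² + τ²)/(κ·(c − s)); its unit principal normal N_ξ(s) = (‖ξ'‖²ξ'' − ⟪ξ', ξ''⟫ξ')/‖‖ξ'‖²ξ'' − ⟪ξ', ξ''⟫ξ'‖ equals (−κ·T(s) + τ·B(s))/√(κ² + τ²); and its second curvature, defined by τ_ξ(s) = (norm of the orthogonal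 projection of ξ'''(s) onto the orthogonal complement of span{T_ξ(s), N_ξ(s)})·‖ξ'(s)‖/‖‖ξ'‖²ξ'' − ⟪ξ', ξ''⟫ξ'‖, equals τσ/(κ·(c − s)·√(κ² + τ²)). -/
open scoped RealInnerProductSpace

local notation "E4" => EuclideanSpace ℝ (Fin 4)

set_option maxHeartbeats 1000000

/-- The involute `ξ = δ + (c − s)T` of a W-curve `δ` in `E⁴`
satisfies `ξ' = (c − s)κ·N`, so `‖ξ'‖ = κ(c − s)` and `T_ξ = N`; its first curvature
equals `√(κ² + τ²)/(κ(c − s))`, its unit principal normal equals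
`(−κT + τB)/√(κ² + τ²)`, and its second curvature equals
`τσ/(κ(c − s)√(κ² + τ²))`. -/
theorem involute_frenet_apparatus
    (I : Set ℝ) (hI : IsOpen I)
    (δ T N B E : ℝ → E4) (κ τ σ : ℝ)
    (hδ : ContDiff ℝ (⊤ : ℕ∞) δ) (hT : ContDiff ℝ (⊤ : ℕ∞) T) (hN : ContDiff ℝ (⊤ : ℕ∞) N)
    (hB : ContDiff ℝ (⊤ : ℕ∞) B) (hE : ContDiff ℝ (⊤ : ℕ∞) E)
    (horth : ∀ s ∈ I, Orthonormal ℝ ![T s, N s, B s, E s])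
    (hTδ : ∀ s ∈ I, T s = deriv δ s)
    (hfr : ∀ s ∈ I,
      deriv T s = κ • N s ∧
      deriv N s = (-κ) • T s + τ • B s ∧
      deriv B s = (-τ) • N s + σ • E s ∧
      deriv E s = (-σ) • B s)
    (hκ0 : 0 < κ) (hτ0 : 0 < τ) (hσ0 : 0 < σ)
    (c : ℝ) (hc : ∀ s ∈ I, s < c)
    (ξ : ℝ → E4) (hξ : ξ = fun s => δ s + (c - s) • T s) :
    ∀ s ∈ I,
      deriv ξ s = ((c - s) * κ) • N s ∧
      ‖deriv ξ s‖ = κ * (c - s) ∧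
      ‖deriv ξ s‖⁻¹ • deriv ξ s = N s ∧
      ‖‖deriv ξ s‖ ^ 2 • deriv (deriv ξ) s
          - ⟪deriv ξ s, deriv (deriv ξ) s⟫ • deriv ξ s‖ / ‖deriv ξ s‖ ^ 4
        = Real.sqrt (κ ^ 2 + τ ^ 2) / (κ * (c - s)) ∧
      ‖‖deriv ξ s‖ ^ 2 • deriv (deriv ξ) s
          - ⟪deriv ξ s, deriv (deriv ξ) s⟫ • deriv ξ s‖⁻¹ •
        (‖deriv ξ s‖ ^ 2 • deriv (deriv ξ) s
          - ⟪deriv ξ s, deriv (deriv ξ) s⟫ • deriv ξ s)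
        = (Real.sqrt (κ ^ 2 + τ ^ 2))⁻¹ • ((-κ) • T s + τ • B s) ∧
      ‖(Submodule.orthogonalProjection
          (Submodule.span ℝ
            ({N s, (Real.sqrt (κ ^ 2 + τ ^ 2))⁻¹ • ((-κ) • T s + τ • B s)} : Set E4))ᗮ
          (deriv (deriv (deriv ξ)) s) : E4)‖ * ‖deriv ξ s‖ /
        ‖‖deriv ξ s‖ ^ 2 • deriv (deriv ξ) s
          - ⟪deriv ξ s, deriv (deriv ξ) s⟫ • deriv ξ s‖
        = τ * σ / (κ * (c - s) * Real.sqrt (κ ^ 2 + τ ^ 2)) := by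
  have hδd : Differentiable ℝ δ := hδ.differentiable (by simp)
  have hTd : Differentiable ℝ T := hT.differentiable (by simp)
  have hNd : Differentiable ℝ N := hN.differentiable (by simp)
  have hBd : Differentiable ℝ B := hB.differentiable (by simp)
  -- first derivative on I
  have hA : ∀ t ∈ I, deriv ξ t = ((c - t) * κ) • N t := by
    intro t ht
    have h1 : HasDerivAt δ (T t) t := by
      rw [hTδ t ht]; exact (hδd t).hasDerivAt
    have h2 : HasDerivAt T (κ • N t) t := by
      rw [← (hfr t ht).1]; exact (hTd t).hasDerivAt
    have h3 : HasDerivAt (fun u : ℝ => c - u) (-1) t := by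
      simpa using (hasDerivAt_id t).const_sub c
    have h4 : HasDerivAt ξ (T t + ((c - t) • (κ • N t) + (-1 : ℝ) • T t)) t := by
      rw [hξ]; exact h1.add (h3.smul h2)
    rw [h4.deriv]; module
  -- second derivative on I
  have hB2 : ∀ t ∈ I, deriv (deriv ξ) t
      = (-κ) • N t + (-((c - t) * κ * κ)) • T t + ((c - t) * κ * τ) • B t := by
    intro t ht
    have hev : deriv ξ =ᶠ[nhds t] fun u => ((c - u) * κ) • N u :=
      Filter.eventuallyEq_of_mem (hI.mem_nhds ht) hA
    rw [hev.deriv_eq]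
    have h3 : HasDerivAt (fun u : ℝ => (c - u) * κ) (-κ) t := by
      simpa using ((hasDerivAt_id t).const_sub c).mul_const κ
    have h2 : HasDerivAt N ((-κ) • T t + τ • B t) t := by
      rw [← (hfr t ht).2.1]; exact (hNd t).hasDerivAt
    have h4 := h3.smul h2
    rw [HasDerivAt.deriv (f := fun u => ((c - u) * κ) • N u) h4]; module
  intro s hs
  have ha : (0 : ℝ) < c - s := sub_pos.mpr (hc s hs)
  -- orthonormality facts
  have ho := horth s hs
  have hip := orthonormal_iff_ite.mp ho
  have iTT : ⟪T s, T s⟫ = 1 := by simpa using hip 0 0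
  have iNN : ⟪N s, N s⟫ = 1 := by simpa using hip 1 1
  have iBB : ⟪B s, B s⟫ = 1 := by simpa using hip 2 2
  have iEE : ⟪E s, E s⟫ = 1 := by simpa using hip 3 3
  have iTB : ⟪T s, B s⟫ = 0 := by simpa using hip 0 2
  have iBT : ⟪B s, T s⟫ = 0 := by simpa using hip 2 0
  have iNT : ⟪N s, T s⟫ = 0 := by simpa using hip 1 0
  have iNB : ⟪N s, B s⟫ = 0 := by simpa using hip 1 2
  have iNE : ⟪N s, E s⟫ = 0 := by simpa using hip 1 3
  have iTE : ⟪T s, E s⟫ = 0 := by simpa using hip 0 3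
  have iBE : ⟪B s, E s⟫ = 0 := by simpa using hip 2 3
  have nN : ‖N s‖ = 1 := by simpa using ho.1 1
  have nE : ‖E s‖ = 1 := by simpa using ho.1 3
  have hsq : (0 : ℝ) < Real.sqrt (κ ^ 2 + τ ^ 2) :=
    Real.sqrt_pos.mpr (by positivity)
  -- third derivative at s
  have hC : deriv (deriv (deriv ξ)) s
      = (2 * (κ * κ)) • T s + (-((c - s) * κ * (κ * κ + τ * τ))) • N s
        + (-(2 * (κ * τ))) • B s + ((c - s) * κ * τ * σ) • E s := by
    have hev : deriv (deriv ξ) =ᶠ[nhds s]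
        fun u => (-κ) • N u + (-((c - u) * κ * κ)) • T u + ((c - u) * κ * τ) • B u :=
      Filter.eventuallyEq_of_mem (hI.mem_nhds hs) hB2
    rw [hev.deriv_eq]
    have hN' : HasDerivAt N ((-κ) • T s + τ • B s) s := by
      rw [← (hfr s hs).2.1]; exact (hNd s).hasDerivAt
    have hT' : HasDerivAt T (κ • N s) s := by
      rw [← (hfr s hs).1]; exact (hTd s).hasDerivAt
    have hBd' : HasDerivAt B ((-τ) • N s + σ • E s) s := by
      rw [← (hfr s hs).2.2.1]; exact (hBd s).hasDerivAt
    have hs1 : HasDerivAt (fun u : ℝ => -((c - u) * κ * κ)) (κ * κ) s := by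
      have := ((((hasDerivAt_id s).const_sub c).mul_const κ).mul_const κ).neg
      exact (by simpa using this : HasDerivAt (-fun y => (c - y) * κ * κ) (κ * κ) s)
    have hs2 : HasDerivAt (fun u : ℝ => (c - u) * κ * τ) (-(κ * τ)) s := by
      have := (((hasDerivAt_id s).const_sub c).mul_const κ).mul_const τ
      simpa [neg_mul] using this
    have h := ((hN'.const_smul (-κ)).add (hs1.smul hT')).add (hs2.smul hBd')
    rw [HasDerivAt.deriv
      (f := fun u => (-κ) • N u + (-((c - u) * κ * κ)) • T u + ((c - u) * κ * τ) • B u) h]; module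
  have hd1 := hA s hs
  have hd2 := hB2 s hs
  -- norm of first derivative
  have hnorm1 : ‖deriv ξ s‖ = κ * (c - s) := by
    rw [hd1, norm_smul, nN, Real.norm_eq_abs, abs_of_pos (by positivity)]
    ring
  -- the vector v
  have hv : ‖deriv ξ s‖ ^ 2 • deriv (deriv ξ) s
      - ⟪deriv ξ s, deriv (deriv ξ) s⟫ • deriv ξ s
      = ((c - s) ^ 3 * κ ^ 3) • ((-κ) • T s + τ • B s) := by
    rw [hnorm1, hd1, hd2]
    have hi : ⟪((c - s) * κ) • N s,
        (-κ) • N s + (-((c - s) * κ * κ)) • T s + ((c - s) * κ * τ) • B s⟫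
        = ((c - s) * κ) * (-κ) := by
      simp only [inner_add_right, real_inner_smul_left, real_inner_smul_right, iNN, iNT, iNB]
      ring
    rw [hi]; module
  have hnormu : ‖(-κ) • T s + τ • B s‖ = Real.sqrt (κ ^ 2 + τ ^ 2) := by
    rw [norm_eq_sqrt_real_inner]
    congr 1
    simp only [inner_add_left, inner_add_right, real_inner_smul_left, real_inner_smul_right,
      iTT, iBB, iTB, iBT]
    ring
  have hvnorm : ‖‖deriv ξ s‖ ^ 2 • deriv (deriv ξ) s
      - ⟪deriv ξ s, deriv (deriv ξ) s⟫ • deriv ξ s‖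
      = (c - s) ^ 3 * κ ^ 3 * Real.sqrt (κ ^ 2 + τ ^ 2) := by
    rw [hv, norm_smul, hnormu, Real.norm_eq_abs, abs_of_pos (by positivity)]
  refine ⟨hd1, hnorm1, ?_, ?_, ?_, ?_⟩
  · rw [hnorm1, hd1, smul_smul, mul_comm (c - s) κ,
      inv_mul_cancel₀ (by positivity), one_smul]
  · rw [hvnorm, hnorm1]
    rw [div_eq_div_iff (by positivity) (by positivity)]
    ring
  · rw [hvnorm, hv, smul_smul]
    congr 1
    have hA0 : ((c - s) ^ 3 * κ ^ 3) ≠ 0 := by positivity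
    field_simp
  · -- second curvature
    set u : E4 := (Real.sqrt (κ ^ 2 + τ ^ 2))⁻¹ • ((-κ) • T s + τ • B s) with hu
    set W : Submodule ℝ E4 := Submodule.span ℝ ({N s, u} : Set E4) with hW
    have hwmem : ((c - s) * κ * τ * σ) • E s ∈ Wᗮ := by
      rw [Submodule.mem_orthogonal]
      intro x hx
      induction hx using Submodule.span_induction with
      | mem x hx =>
        rcases hx with h | h
        · subst h
          simp only [real_inner_smul_right, iNE, mul_zero]
        · simp only [Set.mem_singleton_iff] at h
          subst h
          simp only [hu, real_inner_smul_left, real_inner_smul_right, inner_add_left,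
            iTE, iBE, mul_zero, add_zero, zero_add]
      | zero => simp
      | add x y _ _ hx hy => simp only [inner_add_left, hx, hy, add_zero]
      | smul a x _ hx => simp only [real_inner_smul_left, hx, mul_zero]
    have hpmem : (-((c - s) * κ * (κ * κ + τ * τ))) • N s
        + ((-(2 * κ)) * Real.sqrt (κ ^ 2 + τ ^ 2)) • u ∈ W :=
      Submodule.add_mem _
        (Submodule.smul_mem _ _ (Submodule.subset_span (Set.mem_insert _ _)))
        (Submodule.smul_mem _ _ (Submodule.subset_span (Set.mem_insert_of_mem _ rfl)))
    have hdecomp : deriv (deriv (deriv ξ)) s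
        = ((-((c - s) * κ * (κ * κ + τ * τ))) • N s
            + ((-(2 * κ)) * Real.sqrt (κ ^ 2 + τ ^ 2)) • u)
          + ((c - s) * κ * τ * σ) • E s := by
      rw [hC, hu, smul_smul, mul_assoc (-(2 * κ)), mul_inv_cancel₀ hsq.ne', mul_one]
      module
    have hproj : ((Submodule.orthogonalProjection Wᗮ (deriv (deriv (deriv ξ)) s) : Wᗮ) : E4)
        = ((c - s) * κ * τ * σ) • E s := by
      rw [hdecomp, map_add]
      rw [Submodule.orthogonalProjectionOnto_orthogonal_apply_eq_zero hpmem]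
      rw [zero_add, Submodule.orthogonalProjectionOnto_mem_subspace_eq_self ⟨_, hwmem⟩]
    rw [hproj, hvnorm, hnorm1, norm_smul, nE, Real.norm_eq_abs,
      abs_of_pos (by positivity), mul_one]
    rw [div_eq_div_iff (by positivity) (by positivity)]
    ring
end

section
/- Assume I is nondegenerate. The involute ξ of the W-curve δ cannot lie on a hypersphere: there are no m ∈ E⁴ and r > 0 such that ‖ξ(s) − m‖ = r for all s ∈ I. -/
open scoped RealInnerProductSpace

local notation "E4" => EuclideanSpace ℝ (Fin 4)

/-- The involute `ξ = δ + (c − s)T` of a W-curve `δ` in `E⁴` cannot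
lie on a hypersphere: there are no `m` and `r > 0` with `‖ξ(s) − m‖ = r` on a
nondegenerate interval `I`. -/
theorem involute_not_spherical
    (I : Set ℝ) (hI : IsOpen I)
    (δ T N B E : ℝ → E4) (κ τ σ : ℝ)
    (hδ : ContDiff ℝ (⊤ : ℕ∞) δ) (hT : ContDiff ℝ (⊤ : ℕ∞) T) (hN : ContDiff ℝ (⊤ : ℕ∞) N)
    (hB : ContDiff ℝ (⊤ : ℕ∞) B) (hE : ContDiff ℝ (⊤ : ℕ∞) E)
    (horth : ∀ s ∈ I, Orthonormal ℝ ![T s, N s, B s, E s])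
    (hTδ : ∀ s ∈ I, T s = deriv δ s)
    (hfr : ∀ s ∈ I,
      deriv T s = κ • N s ∧
      deriv N s = (-κ) • T s + τ • B s ∧
      deriv B s = (-τ) • N s + σ • E s ∧
      deriv E s = (-σ) • B s)
    (hκ0 : 0 < κ) (hτ0 : 0 < τ) (hσ0 : 0 < σ)
    (c : ℝ) (hc : ∀ s ∈ I, s < c)
    (ξ : ℝ → E4) (hξ : ξ = fun s => δ s + (c - s) • T s)
    (hne : I.Nontrivial) :
    ¬ ∃ (m : E4) (r : ℝ), 0 < r ∧ ∀ s ∈ I, ‖ξ s - m‖ = r := by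
  subst hξ
  rintro ⟨m, r, hr, hsph⟩
  set ξ : ℝ → E4 := fun s => δ s + (c - s) • T s with hξdef
  -- inner product facts
  have hNN : ∀ s ∈ I, ⟪N s, N s⟫ = 1 := by
    intro s hs
    have := orthonormal_iff_ite.mp (horth s hs) 1 1
    simpa using this
  have hTN : ∀ s ∈ I, ⟪T s, N s⟫ = 0 := by
    intro s hs
    have := orthonormal_iff_ite.mp (horth s hs) 0 1
    simpa using this
  have hBN : ∀ s ∈ I, ⟪B s, N s⟫ = 0 := by
    intro s hs
    have := orthonormal_iff_ite.mp (horth s hs) 2 1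
    simpa using this
  have hEN : ∀ s ∈ I, ⟪E s, N s⟫ = 0 := by
    intro s hs
    have := orthonormal_iff_ite.mp (horth s hs) 3 1
    simpa using this
  -- derivative facts
  have hT' : ∀ s ∈ I, HasDerivAt T (κ • N s) s := by
    intro s hs
    have h := ((hT.differentiable (by simp)) s).hasDerivAt
    rwa [(hfr s hs).1] at h
  have hN' : ∀ s ∈ I, HasDerivAt N ((-κ) • T s + τ • B s) s := by
    intro s hs
    have h := ((hN.differentiable (by simp)) s).hasDerivAt
    rwa [(hfr s hs).2.1] at h
  have hB' : ∀ s ∈ I, HasDerivAt B ((-τ) • N s + σ • E s) s := by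
    intro s hs
    have h := ((hB.differentiable (by simp)) s).hasDerivAt
    rwa [(hfr s hs).2.2.1] at h
  have hE' : ∀ s ∈ I, HasDerivAt E ((-σ) • B s) s := by
    intro s hs
    have h := ((hE.differentiable (by simp)) s).hasDerivAt
    rwa [(hfr s hs).2.2.2] at h
  have hξ' : ∀ s ∈ I, HasDerivAt ξ (((c - s) * κ) • N s) s := by
    intro s hs
    have h1 : HasDerivAt δ (T s) s := by
      have h := ((hδ.differentiable (by simp)) s).hasDerivAt
      rwa [← hTδ s hs] at h
    have h2 : HasDerivAt (fun u : ℝ => c - u) (-1) s := by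
      simpa using (hasDerivAt_id s).const_sub c
    have h3 := h2.smul (hT' s hs)
    have h4 := h1.add h3
    have : T s + ((c - s) • κ • N s + (-1 : ℝ) • T s) = ((c - s) * κ) • N s := by
      rw [smul_smul]
      module
    rwa [this] at h4
  -- helper: deriv of a function vanishing on I
  have derivZero : ∀ (f : ℝ → ℝ), (∀ x ∈ I, f x = 0) → ∀ s ∈ I, deriv f s = 0 := by
    intro f hf s hs
    have : f =ᶠ[nhds s] (fun _ => (0:ℝ)) := Filter.eventuallyEq_of_mem (hI.mem_nhds hs) hf
    rw [this.deriv_eq, deriv_const]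
  have hξm' : ∀ s ∈ I, HasDerivAt (fun u => ξ u - m) (((c - s) * κ) • N s) s := by
    intro s hs
    simpa using (hξ' s hs).sub_const m
  have hcs : ∀ s ∈ I, (0:ℝ) < (c - s) * κ := fun s hs =>
    mul_pos (sub_pos.mpr (hc s hs)) hκ0
  -- Step 1: ⟪N, ξ - m⟫ = 0 on I
  have hb : ∀ s ∈ I, ⟪N s, ξ s - m⟫ = 0 := by
    intro s hs
    have hd : HasDerivAt (fun u => ⟪ξ u - m, ξ u - m⟫)
        (⟪ξ s - m, ((c - s) * κ) • N s⟫ + ⟪((c - s) * κ) • N s, ξ s - m⟫) s :=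
      (hξm' s hs).inner ℝ (hξm' s hs)
    have hz : ∀ x ∈ I, ⟪ξ x - m, ξ x - m⟫ - r^2 = 0 := by
      intro x hx
      rw [real_inner_self_eq_norm_sq, hsph x hx]
      ring
    have h0 := derivZero _ hz s hs
    have hd2 : HasDerivAt (fun u => ⟪ξ u - m, ξ u - m⟫ - r^2)
        (⟪ξ s - m, ((c - s) * κ) • N s⟫ + ⟪((c - s) * κ) • N s, ξ s - m⟫) s :=
      hd.sub_const _
    have hder := hd2.deriv
    rw [h0] at hder
    rw [real_inner_smul_right, real_inner_smul_left, real_inner_comm (ξ s - m)] at hder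
    have h2 : ((c - s) * κ) * ⟪N s, ξ s - m⟫ = 0 := by rw [real_inner_comm]; linarith
    exact (mul_eq_zero.mp h2).resolve_left (ne_of_gt (hcs s hs))
  -- derivative of the N-component
  obtain ⟨s₀, hs₀, _, _, _⟩ := hne
  -- derivatives of component functions
  have hiN' : ∀ s ∈ I, HasDerivAt (fun u => ⟪N u, ξ u - m⟫)
      (-κ * ⟪T s, ξ s - m⟫ + τ * ⟪B s, ξ s - m⟫ + (c - s) * κ) s := by
    intro s hs
    have hd := (hN' s hs).inner ℝ (hξm' s hs)
    have : ⟪N s, ((c - s) * κ) • N s⟫ + ⟪(-κ) • T s + τ • B s, ξ s - m⟫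
        = -κ * ⟪T s, ξ s - m⟫ + τ * ⟪B s, ξ s - m⟫ + (c - s) * κ := by
      rw [real_inner_smul_right, inner_add_left, real_inner_smul_left,
        real_inner_smul_left, hNN s hs]
      ring
    rwa [this] at hd
  have h1 : ∀ s ∈ I, -κ * ⟪T s, ξ s - m⟫ + τ * ⟪B s, ξ s - m⟫ + (c - s) * κ = 0 := by
    intro s hs
    have h0 := derivZero (fun u => ⟪N u, ξ u - m⟫) hb s hs
    rw [(hiN' s hs).deriv] at h0
    exact h0
  have hiT' : ∀ s ∈ I, HasDerivAt (fun u => ⟪T u, ξ u - m⟫) 0 s := by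
    intro s hs
    have hd := (hT' s hs).inner ℝ (hξm' s hs)
    have : ⟪T s, ((c - s) * κ) • N s⟫ + ⟪κ • N s, ξ s - m⟫ = 0 := by
      rw [real_inner_smul_right, real_inner_smul_left, hTN s hs, hb s hs]
      ring
    rwa [this] at hd
  have hiB' : ∀ s ∈ I, HasDerivAt (fun u => ⟪B u, ξ u - m⟫) (σ * ⟪E s, ξ s - m⟫) s := by
    intro s hs
    have hd := (hB' s hs).inner ℝ (hξm' s hs)
    have : ⟪B s, ((c - s) * κ) • N s⟫ + ⟪(-τ) • N s + σ • E s, ξ s - m⟫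
        = σ * ⟪E s, ξ s - m⟫ := by
      rw [real_inner_smul_right, inner_add_left, real_inner_smul_left,
        real_inner_smul_left, hBN s hs, hb s hs]
      ring
    rwa [this] at hd
  -- Step: ⟪E, ξ - m⟫ constant
  have hiE0 : ∀ s ∈ I, ⟪E s, ξ s - m⟫ = κ / (τ * σ) := by
    intro s hs
    have hH : HasDerivAt (fun u => -κ * ⟪T u, ξ u - m⟫ + τ * ⟪B u, ξ u - m⟫ + (c - u) * κ)
        (-κ * 0 + τ * (σ * ⟪E s, ξ s - m⟫) + -κ) s := by
      have hlin : HasDerivAt (fun u : ℝ => (c - u) * κ) (-κ) s := by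
        simpa using ((hasDerivAt_id s).const_sub c).mul_const κ
      exact (((hiT' s hs).const_mul (-κ)).add ((hiB' s hs).const_mul τ)).add hlin
    have h0 := derivZero _ h1 s hs
    rw [hH.deriv] at h0
    have hτσ : τ * σ ≠ 0 := by positivity
    rw [eq_div_iff hτσ]
    linarith
  have hiB0 : ∀ s ∈ I, ⟪B s, ξ s - m⟫ = 0 := by
    intro s hs
    have hiE' : HasDerivAt (fun u => ⟪E u, ξ u - m⟫) (-σ * ⟪B s, ξ s - m⟫) s := by
      have hd := (hE' s hs).inner ℝ (hξm' s hs)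
      have : ⟪E s, ((c - s) * κ) • N s⟫ + ⟪(-σ) • B s, ξ s - m⟫ = -σ * ⟪B s, ξ s - m⟫ := by
        rw [real_inner_smul_right, real_inner_smul_left, hEN s hs]
        ring
      rwa [this] at hd
    have hz : ∀ x ∈ I, ⟪E x, ξ x - m⟫ - κ / (τ * σ) = 0 := by
      intro x hx; rw [hiE0 x hx]; ring
    have h0 := derivZero _ hz s hs
    rw [(hiE'.sub_const _).deriv] at h0
    have hσ : σ ≠ 0 := ne_of_gt hσ0
    have : σ * ⟪B s, ξ s - m⟫ = 0 := by linarith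
    exact (mul_eq_zero.mp this).resolve_left hσ
  -- Step: ⟪T, ξ - m⟫ = c - s on I
  have hiT0 : ∀ s ∈ I, ⟪T s, ξ s - m⟫ = c - s := by
    intro s hs
    have h := h1 s hs
    rw [hiB0 s hs] at h
    have hκ : κ ≠ 0 := ne_of_gt hκ0
    have h2 : κ * (⟪T s, ξ s - m⟫ - (c - s)) = 0 := by ring_nf; ring_nf at h; linarith
    have := (mul_eq_zero.mp h2).resolve_left hκ
    linarith
  -- final contradiction
  have hz : ∀ x ∈ I, ⟪T x, ξ x - m⟫ - (c - x) = 0 := by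
    intro x hx; rw [hiT0 x hx]; ring
  have h0 := derivZero _ hz s₀ hs₀
  have hfin : HasDerivAt (fun u => ⟪T u, ξ u - m⟫ - (c - u)) (0 - (-1)) s₀ :=
    (hiT' s₀ hs₀).sub ((hasDerivAt_id s₀).const_sub c)
  rw [hfin.deriv] at h0
  norm_num at h0
end
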